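/- arXiv:2506.11334 — 4 statements merged into one kernel-verified Lean document; each statement's English description precedes it below -/
import Mathlib

section
/- For every k-pebble transducer with equality tests A having n states, there exists a basic k-pebble transducer B with at most n·2^{k²} states such that ⟦A⟧ = ⟦B⟧. Moreover, if A is deterministic (respectively reverse-deterministic, reversible) then so is B. -/
/-!
Common framework: pebble transducers with equality tests
(following "Reversible Pebble Transducers").
-/

namespace RevPeb

/-- Atomic tests: `headPeb i` is `(h = p_i)`, `pebPeb i j` is `(p_i = p_j)`
(indices are 0-based, pebble `i+1` of the paper). -/
inductive Atom (k : ℕ) : Type where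
  | headPeb : Fin k → Atom k
  | pebPeb : Fin k → Fin k → Atom k

/-- Pebble operations (0-based: `drop i`/`lift i` refer to pebble `i+1` of the paper). -/
inductive PebOp (k : ℕ) : Type where
  | nop : PebOp k
  | drop : Fin k → PebOp k
  | lift : Fin k → PebOp k

/-- A test is a conjunction of literals: an atom together with a polarity. -/
abbrev Test (k : ℕ) : Type := List (Atom k × Bool)

/-- A transition `(q, a, φ, op, q')`; `letter = none` encodes the endmarker `#`. -/
structure PTrans (Q Sg : Type*) (k : ℕ) where
  src : Q
  letter : Option Sg
  test : Test k
  op : PebOp k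
  tgt : Q

/-- A `k`-pebble transducer with equality tests (data part).
`dir q` is the polarity of state `q` (which part of `Q_{+1} ⊎ Q_0 ⊎ Q_{-1}` it lies in). -/
structure PT (Q Sg Gm : Type*) (k : ℕ) where
  dir : Q → SignType
  qinit : Q
  qfin : Q
  δ : Set (PTrans Q Sg k)
  μ : PTrans Q Sg k → List Gm

variable {Q Sg Gm : Type*} {k : ℕ}

/-- Well-formedness: `q_i, q_f ∈ Q_0`, `q_i ≠ q_f`, no transition leaves `q_f`
nor enters `q_i`, and the transition set is finite. -/
def PT.WF (T : PT Q Sg Gm k) : Prop :=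
  T.dir T.qinit = 0 ∧ T.dir T.qfin = 0 ∧ T.qinit ≠ T.qfin ∧
  (∀ t ∈ T.δ, t.src ≠ T.qfin ∧ t.tgt ≠ T.qinit) ∧ T.δ.Finite

/-- Letter of the circular word `#u` at position `h ∈ {0,…,|u|}`;
`none` is the endmarker `#` (at position 0). -/
def letterAt (u : List Sg) (h : ℕ) : Option Sg :=
  if h = 0 then none else u[h-1]?

/-- Satisfaction of an atomic test by a pebble stack and head position. -/
def atomSat (peb : List ℕ) (h : ℕ) : Atom k → Prop
  | .headPeb i => (i : ℕ) < peb.length ∧ peb.getD i 0 = h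
  | .pebPeb i j => (i : ℕ) < peb.length ∧ (j : ℕ) < peb.length ∧ peb.getD i 0 = peb.getD j 0

/-- Satisfaction of a test (conjunction of literals). -/
def testSat (peb : List ℕ) (h : ℕ) (φ : Test k) : Prop :=
  ∀ l ∈ φ, (atomSat peb h l.1 ↔ l.2 = true)

/-- Executability of a pebble operation: `drop i` (pebble `i+1` of the paper) needs
`|peb| = i`, `lift i` needs `|peb| = i+1` and the top pebble at the head. -/
def opEnabled (peb : List ℕ) (h : ℕ) : PebOp k → Prop
  | .nop => True
  | .drop n => peb.length = (n : ℕ)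
  | .lift n => peb.length = (n : ℕ) + 1 ∧ peb.getD (n : ℕ) 0 = h

/-- Effect of a pebble operation on the pebble stack. -/
def opApply (peb : List ℕ) (h : ℕ) : PebOp k → List ℕ
  | .nop => peb
  | .drop _ => peb ++ [h]
  | .lift _ => peb.dropLast

/-- Head movement on the circular word `#u` (`len = |u|`, positions mod `len+1`). -/
def nextHead (len h : ℕ) : SignType → ℕ
  | .pos => (h + 1) % (len + 1)
  | .zero => h
  | .neg => (h + len) % (len + 1)

/-- A configuration `(q, peb, h)`. -/
structure Config (Q : Type*) where
  q : Q
  peb : List ℕ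
  h : ℕ

/-- One step of the transducer on input `u` using transition `t`. -/
def PT.StepT (T : PT Q Sg Gm k) (u : List Sg) (t : PTrans Q Sg k) (C C' : Config Q) : Prop :=
  t ∈ T.δ ∧ C.q = t.src ∧ C.h ≤ u.length ∧ C.peb.length ≤ k ∧
  letterAt u C.h = t.letter ∧
  testSat C.peb C.h t.test ∧ opEnabled C.peb C.h t.op ∧
  C'.q = t.tgt ∧ C'.peb = opApply C.peb C.h t.op ∧
  C'.h = nextHead u.length C.h (T.dir t.tgt)

/-- Runs, accumulating the produced output word. -/
inductive PT.Run (T : PT Q Sg Gm k) (u : List Sg) :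
    Config Q → Config Q → List Gm → Prop where
  | refl (C : Config Q) : PT.Run T u C C []
  | step {C C' C'' : Config Q} (t : PTrans Q Sg k) {v : List Gm} :
      T.StepT u t C C' → PT.Run T u C' C'' v → PT.Run T u C C'' (T.μ t ++ v)

/-- Semantics: pairs `(u,v)` such that some accepting run on `#u` outputs `v`. -/
def PT.Sem (T : PT Q Sg Gm k) : Set (List Sg × List Gm) :=
  {p | T.Run p.1 ⟨T.qinit, [], 0⟩ ⟨T.qfin, [], 0⟩ p.2}

/-- `t` is enabled at configuration `C` (on input `u`). -/
def PT.Enabled (T : PT Q Sg Gm k) (u : List Sg) (t : PTrans Q Sg k) (C : Config Q) : Prop :=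
  ∃ C', T.StepT u t C C'

/-- `t` is reverse-enabled at configuration `C'` (on input `u`). -/
def PT.RevEnabled (T : PT Q Sg Gm k) (u : List Sg) (t : PTrans Q Sg k) (C' : Config Q) : Prop :=
  ∃ C, T.StepT u t C C'

/-- Determinism: two transitions simultaneously enabled at a common configuration coincide. -/
def PT.Deterministic (T : PT Q Sg Gm k) : Prop :=
  ∀ (u : List Sg) (t₁ t₂ : PTrans Q Sg k) (C : Config Q),
    T.Enabled u t₁ C → T.Enabled u t₂ C → t₁ = t₂

/-- Reverse-determinism. -/
def PT.RevDeterministic (T : PT Q Sg Gm k) : Prop :=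
  ∀ (u : List Sg) (t₁ t₂ : PTrans Q Sg k) (C' : Config Q),
    T.RevEnabled u t₁ C' → T.RevEnabled u t₂ C' → t₁ = t₂

/-- Reversible = deterministic and reverse-deterministic. -/
def PT.Reversible (T : PT Q Sg Gm k) : Prop := T.Deterministic ∧ T.RevDeterministic

/-- A basic pebble transducer uses no pebble-pebble equality atoms. -/
def PT.Basic (T : PT Q Sg Gm k) : Prop :=
  ∀ t ∈ T.δ, ∀ l ∈ t.test, ∀ i j : Fin k, l.1 ≠ Atom.pebPeb i j

/-- `T` computes the partial function `f` (encoded with `Option`): `⟦T⟧` is the graph of `f`. -/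
def PT.Computes (T : PT Q Sg Gm k) (f : List Sg → Option (List Gm)) : Prop :=
  ∀ u v, (u, v) ∈ T.Sem ↔ f u = some v

end RevPeb

namespace RevPeb

section Construction

variable {Q Sg Gm : Type} {k : ℕ}

/-- `E` encodes the equality pattern of the pebble stack `p`. -/
def Encodes (p : List ℕ) (E : Fin k → Fin k → Bool) : Prop :=
  ∀ i j : Fin k, E i j = true ↔
    ((i : ℕ) < p.length ∧ (j : ℕ) < p.length ∧ p.getD i 0 = p.getD j 0)

/-- Head-coincidence pattern of a stack `p` at head `h`. -/
def actualb (k : ℕ) (p : List ℕ) (h : ℕ) : Fin k → Bool :=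
  fun i => decide ((i : ℕ) < p.length ∧ p.getD i 0 = h)

/-- Update of the equality pattern under a pebble operation. -/
def upd (E : Fin k → Fin k → Bool) (b : Fin k → Bool) : PebOp k → (Fin k → Fin k → Bool)
  | .nop => E
  | .drop n => fun i j =>
      if i = n then (if j = n then true else b j) else (if j = n then b i else E i j)
  | .lift n => fun i j => if i = n ∨ j = n then false else E i j

/-- Compatibility data for building a basic transition out of `tA` with pattern `(E, b, m)`. -/
def Good (tA : PTrans Q Sg k) (E : Fin k → Fin k → Bool) (b : Fin k → Bool) (m : ℕ) : Prop :=
  m ≤ k ∧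
  (∀ i : Fin k, (E i i = true ↔ (i : ℕ) < m)) ∧
  (∃ p : List ℕ, p.length = m ∧ Encodes p E) ∧
  (∀ i : Fin k, b i = true → (i : ℕ) < m) ∧
  (∀ i j : Fin k, E i j = true → b i = b j) ∧
  (∀ i j : Fin k, b i = true → b j = true → E i j = true) ∧
  (∀ i pol, (Atom.headPeb i, pol) ∈ tA.test → pol = b i) ∧
  (∀ i j pol, (Atom.pebPeb i j, pol) ∈ tA.test → pol = E i j) ∧
  (match tA.op with
   | .nop => True
   | .drop n => m = (n : ℕ)
   | .lift n => m = (n : ℕ) + 1 ∧ b n = true)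

/-- The canonical (complete, basic) test for pattern `(m, b)`. -/
def ctest (k m : ℕ) (b : Fin k → Bool) : Test k :=
  ((List.finRange k).take m).map (fun i => (Atom.headPeb i, b i))

/-- The basic transition associated to `tA` and a pattern, with `e` padding literals
(used to recover `tA`'s index for the output function). -/
def Ftr (hk : 0 < k) (e : ℕ) (tA : PTrans Q Sg k) (E : Fin k → Fin k → Bool)
    (b : Fin k → Bool) (m : ℕ) : PTrans (Q × (Fin k → Fin k → Bool)) Sg k :=
  ⟨(tA.src, E), tA.letter,
   ctest k m b ++ List.replicate e (Atom.headPeb ⟨0, hk⟩, b ⟨0, hk⟩),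
   tA.op, (tA.tgt, upd E b tA.op)⟩

/-- Number of placed pebbles, read off a pattern. -/
def mE (E : Fin k → Fin k → Bool) : ℕ :=
  (Finset.univ.filter fun i : Fin k => E i i = true).card

lemma mE_eq {E : Fin k → Fin k → Bool} {m : ℕ} (hm : m ≤ k)
    (hd : ∀ i : Fin k, E i i = true ↔ (i : ℕ) < m) : mE E = m := by
  have : (Finset.univ.filter fun i : Fin k => E i i = true)
      = Finset.map (Fin.castLEEmb hm) Finset.univ := by
    ext i
    simp only [Finset.mem_filter, Finset.mem_univ, true_and, Finset.mem_map, hd i]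
    constructor
    · intro hi; exact ⟨⟨(i : ℕ), hi⟩, Fin.ext rfl⟩
    · rintro ⟨j, rfl⟩; exact j.2
  rw [mE, this, Finset.card_map, Finset.card_univ, Fintype.card_fin]

lemma mem_take_finRange {m : ℕ} {i : Fin k} :
    i ∈ (List.finRange k).take m ↔ (i : ℕ) < m := by
  rw [List.mem_take_iff_getElem]
  constructor
  · rintro ⟨j, hj, rfl⟩
    simpa using lt_of_lt_of_le (Nat.lt_of_lt_of_le hj (le_refl _)) (by
      simpa using (Nat.le_of_lt_succ (Nat.lt_succ_of_lt hj)).trans (le_refl _))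
  · intro hi
    exact ⟨(i : ℕ), by simp [i.2, hi], by simp⟩

lemma length_ctest {m : ℕ} (hm : m ≤ k) (b : Fin k → Bool) :
    (ctest k m b).length = m := by
  simp [ctest, hm]

lemma mem_ctest {m : ℕ} {b : Fin k → Bool} {l : Atom k × Bool} :
    l ∈ ctest k m b ↔ ∃ i : Fin k, (i : ℕ) < m ∧ l = (Atom.headPeb i, b i) := by
  simp only [ctest, List.mem_map, mem_take_finRange]
  constructor
  · rintro ⟨i, hi, rfl⟩; exact ⟨i, hi, rfl⟩
  · rintro ⟨i, hi, rfl⟩; exact ⟨i, hi, rfl⟩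

/-- `p` realizes the pattern `(E, b)` at head `h`. -/
def Realizes (p : List ℕ) (E : Fin k → Fin k → Bool) (b : Fin k → Bool) (h : ℕ) : Prop :=
  Encodes p E ∧ ∀ i : Fin k, (((i : ℕ) < p.length ∧ p.getD i 0 = h) ↔ b i = true)

lemma realizes_testSat {tA : PTrans Q Sg k} {E : Fin k → Fin k → Bool} {b : Fin k → Bool}
    {m : ℕ} (hG : Good tA E b m) {p : List ℕ} {h : ℕ} (hR : Realizes p E b h) :
    testSat p h tA.test := by
  rintro ⟨a, pol⟩ hl
  cases a with
  | headPeb i =>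
      have hp := hG.2.2.2.2.2.2.1 i pol hl
      simp only [atomSat]
      rw [hp]; exact hR.2 i
  | pebPeb i j =>
      have hp := hG.2.2.2.2.2.2.2.1 i j pol hl
      simp only [atomSat]
      rw [hp]; exact (hR.1 i j).symm

open scoped Classical in
/-- Least representative of the class of pebble `i`. -/
noncomputable def rep (E : Fin k → Fin k → Bool) (i : Fin k) : ℕ :=
  if h : ∃ n : ℕ, ∃ hn : n < k, E ⟨n, hn⟩ i = true then Nat.find h else 0

lemma rep_spec {E : Fin k → Fin k → Bool} {i : Fin k} (hii : E i i = true) :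
    ∃ hn : rep E i < k, E ⟨rep E i, hn⟩ i = true := by
  have hex : ∃ n : ℕ, ∃ hn : n < k, E ⟨n, hn⟩ i = true := ⟨i, i.2, by simpa using hii⟩
  rw [rep, dif_pos hex]
  exact Nat.find_spec hex

lemma rep_min {E : Fin k → Fin k → Bool} {i : Fin k} (hii : E i i = true) {n : ℕ}
    (hn : n < k) (h : E ⟨n, hn⟩ i = true) : rep E i ≤ n := by
  have hex : ∃ n : ℕ, ∃ hn : n < k, E ⟨n, hn⟩ i = true := ⟨i, i.2, by simpa using hii⟩
  rw [rep, dif_pos hex]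
  exact Nat.find_min' hex ⟨hn, h⟩

lemma exists_realizes {E : Fin k → Fin k → Bool} {b : Fin k → Bool} {m : ℕ}
    (hm : m ≤ k)
    (hval : ∃ p : List ℕ, p.length = m ∧ Encodes p E)
    (hbc : ∀ i : Fin k, b i = true → (i : ℕ) < m)
    (hc1 : ∀ i j : Fin k, E i j = true → b i = b j)
    (hc2 : ∀ i j : Fin k, b i = true → b j = true → E i j = true)
    (h : ℕ) :
    ∃ p : List ℕ, p.length = m ∧ Realizes p E b h := by
  obtain ⟨p0, hp0l, hp0⟩ := hval
  have hrange : ∀ i j : Fin k, E i j = true → (i : ℕ) < m ∧ (j : ℕ) < m := by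
    intro i j hij
    have := (hp0 i j).1 hij
    exact ⟨hp0l ▸ this.1, hp0l ▸ this.2.1⟩
  have hdiag : ∀ i : Fin k, E i i = true ↔ (i : ℕ) < m := by
    intro i
    rw [hp0 i i, hp0l]
    tauto
  have hsym : ∀ i j : Fin k, E i j = true → E j i = true := by
    intro i j hij
    obtain ⟨h1, h2, h3⟩ := (hp0 i j).1 hij
    exact (hp0 j i).2 ⟨h2, h1, h3.symm⟩
  have htrans : ∀ a c d : Fin k, E a c = true → E c d = true → E a d = true := by
    intro a c d h1 h2
    obtain ⟨g1, g2, g3⟩ := (hp0 a c).1 h1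
    obtain ⟨f1, f2, f3⟩ := (hp0 c d).1 h2
    exact (hp0 a d).2 ⟨g1, f2, g3.trans f3⟩
  have hrep_eq : ∀ i j : Fin k, E i j = true → rep E i = rep E j := by
    intro i j hij
    have hii : E i i = true := (hdiag i).2 (hrange i j hij).1
    have hjj : E j j = true := (hdiag j).2 (hrange i j hij).2
    obtain ⟨hri, hEri⟩ := rep_spec hii
    obtain ⟨hrj, hErj⟩ := rep_spec hjj
    apply le_antisymm
    · exact rep_min hii hrj (htrans _ _ _ hErj (hsym i j hij))
    · exact rep_min hjj hri (htrans _ _ _ hEri hij)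
  have hE_of_rep : ∀ i j : Fin k, (i : ℕ) < m → (j : ℕ) < m → rep E i = rep E j →
      E i j = true := by
    intro i j hi hj hr
    obtain ⟨hri, hEri⟩ := rep_spec ((hdiag i).2 hi)
    obtain ⟨hrj, hErj⟩ := rep_spec ((hdiag j).2 hj)
    have : E ⟨rep E i, hri⟩ j = true := by
      have : (⟨rep E i, hri⟩ : Fin k) = ⟨rep E j, hrj⟩ := Fin.ext hr
      rw [this]; exact hErj
    exact htrans _ _ _ (hsym _ _ hEri) this
  set f : Fin k → ℕ := fun i => if b i = true then h else h + 1 + rep E i with hf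
  refine ⟨((List.finRange k).take m).map f, by simp [hm], ?_, ?_⟩
  case refine_2 =>
    -- head pattern
    intro i
    simp only [List.length_map, List.length_take, List.length_finRange, lt_min_iff]
    constructor
    · rintro ⟨⟨hi, -⟩, hgd⟩
      have : (((List.finRange k).take m).map f).getD i 0 = f i := by
        rw [List.getD_eq_getElem _ _ (by simp [hi, i.2])]
        simp [hi, i.2]
      rw [this] at hgd
      by_contra hb
      simp only [hf, hb, if_false] at hgd
      omega
    · intro hb
      have hi := hbc i hb
      have : (((List.finRange k).take m).map f).getD i 0 = f i := by
        rw [List.getD_eq_getElem _ _ (by simp [hi, i.2])]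
        simp [hi, i.2]
      rw [this]
      exact ⟨⟨hi, i.2⟩, by simp [hf, hb]⟩
  case refine_1 =>
    intro i j
    simp only [List.length_map, List.length_take, List.length_finRange, lt_min_iff]
    have gd : ∀ i : Fin k, (i : ℕ) < m → (((List.finRange k).take m).map f).getD i 0 = f i := by
      intro i hi
      rw [List.getD_eq_getElem _ _ (by simp [hi, i.2])]
      simp [hi, i.2]
    constructor
    · intro hij
      obtain ⟨hi, hj⟩ := hrange i j hij
      refine ⟨⟨hi, i.2⟩, ⟨hj, j.2⟩, ?_⟩
      rw [gd i hi, gd j hj]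
      have hbij := hc1 i j hij
      by_cases hb : b i = true
      · simp [hf, hb, hbij ▸ hb]
      · have hbj : ¬ b j = true := by rw [← hbij]; exact hb
        simp only [hf, hb, hbj, if_false]
        rw [hrep_eq i j hij]
    · rintro ⟨⟨hi, -⟩, ⟨hj, -⟩, heq⟩
      rw [gd i hi, gd j hj] at heq
      by_cases hbi : b i = true <;> by_cases hbj : b j = true
      · exact hc2 i j hbi hbj
      · exfalso; simp [hf, hbi, hbj] at heq; omega
      · exfalso; simp [hf, hbi, hbj] at heq; omega
      · simp [hf, hbi, hbj] at heq
        exact hE_of_rep i j hi hj (by omega)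

lemma getD_concat_lt {l : List ℕ} {x i : ℕ} (hi : i < l.length) :
    (l ++ [x]).getD i 0 = l.getD i 0 := by
  rw [List.getD_eq_getElem _ _ (by simp; omega), List.getD_eq_getElem _ _ hi]
  exact List.getElem_append_left hi

lemma getD_concat_self {l : List ℕ} {x : ℕ} : (l ++ [x]).getD l.length 0 = x := by
  rw [List.getD_eq_getElem _ _ (by simp)]
  simp

lemma getD_dropLast' {l : List ℕ} {i : ℕ} (hi : i < l.length - 1) :
    l.dropLast.getD i 0 = l.getD i 0 := by
  rw [List.getD_eq_getElem _ _ (by simp only [List.length_dropLast]; omega),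
    List.getD_eq_getElem _ _ (by omega), List.getElem_dropLast]

lemma encodes_diag {p : List ℕ} {E : Fin k → Fin k → Bool} (hE : Encodes p E) :
    ∀ i : Fin k, (E i i = true ↔ (i : ℕ) < p.length) := by
  intro i
  rw [hE i i]
  tauto

lemma encodes_nil : Encodes ([] : List ℕ) (fun _ _ => false : Fin k → Fin k → Bool) := by
  intro i j
  simp

lemma encodes_nil' {E : Fin k → Fin k → Bool} (hE : Encodes [] E) :
    E = fun _ _ => false := by
  funext i j
  rw [Bool.eq_false_iff]
  intro h
  have := (hE i j).1 h
  simp at this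

lemma encodes_upd {p : List ℕ} {E : Fin k → Fin k → Bool} {h : ℕ} {op : PebOp k}
    (hE : Encodes p E) (hop : opEnabled p h op) :
    Encodes (opApply p h op) (upd E (actualb k p h) op) := by
  cases op with
  | nop => simpa [opApply, upd] using hE
  | drop n =>
      have hlen : p.length = (n : ℕ) := hop
      have gd1 : ∀ a : ℕ, a < (n : ℕ) → (p ++ [h]).getD a 0 = p.getD a 0 := by
        intro a ha; exact getD_concat_lt (by omega)
      have gd2 : (p ++ [h]).getD n 0 = h := by rw [← hlen]; exact getD_concat_self
      intro i j
      simp only [upd, opApply, actualb, List.length_append, List.length_singleton, hlen]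
      by_cases hi : i = n <;> by_cases hj : j = n
      · rw [hi, hj]; simp [gd2]
      · rw [hi, if_pos rfl, if_neg hj]
        simp only [decide_eq_true_eq]
        have hjn : (j : ℕ) ≠ (n : ℕ) := fun hc => hj (Fin.ext hc)
        constructor
        · rintro ⟨h1, h2⟩
          exact ⟨by omega, by omega, by rw [gd2, gd1 j h1, h2]⟩
        · rintro ⟨-, h2, h3⟩
          have hjlt : (j : ℕ) < (n : ℕ) := by omega
          rw [gd2, gd1 j hjlt] at h3
          exact ⟨hjlt, h3.symm⟩
      · rw [hj, if_neg hi, if_pos rfl]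
        simp only [decide_eq_true_eq]
        have hin : (i : ℕ) ≠ (n : ℕ) := fun hc => hi (Fin.ext hc)
        constructor
        · rintro ⟨h1, h2⟩
          exact ⟨by omega, by omega, by rw [gd2, gd1 i h1, h2]⟩
        · rintro ⟨h1, -, h3⟩
          have hilt : (i : ℕ) < (n : ℕ) := by omega
          rw [gd2, gd1 i hilt] at h3
          exact ⟨hilt, h3⟩
      · have hin : (i : ℕ) ≠ (n : ℕ) := fun hc => hi (Fin.ext hc)
        have hjn : (j : ℕ) ≠ (n : ℕ) := fun hc => hj (Fin.ext hc)
        simp only [if_neg hi, if_neg hj]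
        rw [hE i j, hlen]
        constructor
        · rintro ⟨h1, h2, h3⟩
          exact ⟨by omega, by omega, by rw [gd1 i h1, gd1 j h2, h3]⟩
        · rintro ⟨h1, h2, h3⟩
          have h1' : (i : ℕ) < (n : ℕ) := by omega
          have h2' : (j : ℕ) < (n : ℕ) := by omega
          rw [gd1 i h1', gd1 j h2'] at h3
          exact ⟨h1', h2', h3⟩
  | lift n =>
      obtain ⟨hlen, htop⟩ := hop
      have hdl : p.dropLast.length = (n : ℕ) := by simp [List.length_dropLast, hlen]
      have gd : ∀ a : ℕ, a < (n : ℕ) → p.dropLast.getD a 0 = p.getD a 0 := by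
        intro a ha; exact getD_dropLast' (by omega)
      intro i j
      simp only [upd, opApply, hdl]
      by_cases hij : i = n ∨ j = n
      · rw [if_pos hij]
        constructor
        · intro hc; exact absurd hc (by simp)
        · rintro ⟨h1, h2, -⟩
          exfalso
          rcases hij with rfl | rfl
          · omega
          · omega
      · rw [if_neg hij]
        push_neg at hij
        have hin : (i : ℕ) ≠ (n : ℕ) := fun hc => hij.1 (Fin.ext hc)
        have hjn : (j : ℕ) ≠ (n : ℕ) := fun hc => hij.2 (Fin.ext hc)
        rw [hE i j, hlen]
        constructor
        · rintro ⟨h1, h2, h3⟩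
          have h1' : (i : ℕ) < (n : ℕ) := by omega
          have h2' : (j : ℕ) < (n : ℕ) := by omega
          exact ⟨h1', h2', by rw [gd i h1', gd j h2', h3]⟩
        · rintro ⟨h1, h2, h3⟩
          rw [gd i h1, gd j h2] at h3
          exact ⟨by omega, by omega, h3⟩

lemma diag_unique {m1 m2 : ℕ} (h1 : m1 ≤ k) (h2 : m2 ≤ k)
    (h : ∀ i : Fin k, ((i : ℕ) < m1 ↔ (i : ℕ) < m2)) : m1 = m2 := by
  by_contra hne
  rcases Nat.lt_or_ge m1 m2 with hlt | hge
  · have := (h ⟨m1, lt_of_lt_of_le hlt h2⟩).2 hlt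
    simp at this
  · have hlt : m2 < m1 := by omega
    have := (h ⟨m2, lt_of_lt_of_le hlt h1⟩).1 hlt
    simp at this

noncomputable local instance ptransDecEq : DecidableEq (PTrans Q Sg k) := Classical.decEq _

/-- The basic transducer simulating `A`; `L` is a listing of `A.δ`. -/
noncomputable def Bof (A : PT Q Sg Gm k) (hk : 0 < k) (L : List (PTrans Q Sg k)) :
    PT (Q × (Fin k → Fin k → Bool)) Sg Gm k where
  dir s := A.dir s.1
  qinit := (A.qinit, fun _ _ => false)
  qfin := (A.qfin, fun _ _ => false)
  δ := {tB | ∃ tA ∈ A.δ, ∃ E b m, Good tA E b m ∧ tB = Ftr hk (L.idxOf tA) tA E b m}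
  μ tB := A.μ (L.getD (tB.test.length - mE tB.src.2) ⟨A.qinit, none, [], .nop, A.qinit⟩)

lemma Bof_mu {A : PT Q Sg Gm k} {hk : 0 < k} {L : List (PTrans Q Sg k)}
    {tA : PTrans Q Sg k} (htA : tA ∈ L) {E : Fin k → Fin k → Bool} {b : Fin k → Bool}
    {m : ℕ} (hG : Good tA E b m) :
    (Bof A hk L).μ (Ftr hk (L.idxOf tA) tA E b m) = A.μ tA := by
  have hlen : (Ftr hk (L.idxOf tA) tA E b m).test.length = m + L.idxOf tA := by
    simp [Ftr, length_ctest hG.1]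
  have hsrc : (Ftr hk (L.idxOf tA) tA E b m).src.2 = E := rfl
  have hmE : mE E = m := mE_eq hG.1 hG.2.1
  simp only [Bof, hlen, hsrc, hmE, Nat.add_sub_cancel_left]
  have hidx : L.idxOf tA < L.length := List.idxOf_lt_length_iff.2 htA
  rw [List.getD_eq_getElem _ _ hidx, List.getElem_idxOf hidx]

lemma testSat_Ftr_extract {hk : 0 < k} {e : ℕ} {tA : PTrans Q Sg k}
    {E : Fin k → Fin k → Bool} {b : Fin k → Bool} {m : ℕ} {peb : List ℕ} {h : ℕ}
    (hsat : testSat peb h (Ftr hk e tA E b m).test) :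
    ∀ i : Fin k, (i : ℕ) < m → (((i : ℕ) < peb.length ∧ peb.getD i 0 = h) ↔ b i = true) := by
  intro i hi
  have := hsat (Atom.headPeb i, b i)
    (List.mem_append_left _ (mem_ctest.2 ⟨i, hi, rfl⟩))
  simpa [atomSat] using this

lemma testSat_Ftr_actual {hk : 0 < k} {e : ℕ} {tA : PTrans Q Sg k}
    {E : Fin k → Fin k → Bool} {m : ℕ} {peb : List ℕ} {h : ℕ} :
    testSat peb h (Ftr hk e tA E (actualb k peb h) m).test := by
  rintro ⟨a, pol⟩ hl
  simp only [Ftr, List.mem_append, List.mem_replicate] at hl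
  rcases hl with hl | ⟨-, hl⟩
  · obtain ⟨i, -, heq⟩ := mem_ctest.1 hl
    obtain ⟨rfl, rfl⟩ := Prod.mk.injEq .. ▸ heq
    simp [atomSat, actualb]
  · obtain ⟨rfl, rfl⟩ := Prod.mk.injEq .. ▸ hl
    simp [atomSat, actualb]

lemma mk_good {A : PT Q Sg Gm k} {u : List Sg} {tA : PTrans Q Sg k} {C C' : Config Q}
    (hst : A.StepT u tA C C') {E : Fin k → Fin k → Bool} (hE : Encodes C.peb E) :
    Good tA E (actualb k C.peb C.h) C.peb.length := by
  obtain ⟨hδ, hsrc, hhead, hlen, hletter, htest, hop, htgt, hpeb, hh⟩ := hst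
  refine ⟨hlen, encodes_diag hE, ⟨C.peb, rfl, hE⟩, ?_, ?_, ?_, ?_, ?_, ?_⟩
  · intro i hb
    simpa [actualb] using (of_decide_eq_true hb).1
  · intro i j hij
    obtain ⟨h1, h2, h3⟩ := (hE i j).1 hij
    simp only [actualb]
    rw [decide_eq_decide]
    constructor
    · rintro ⟨-, hh1⟩; exact ⟨h2, h3 ▸ hh1⟩
    · rintro ⟨-, hh2⟩; exact ⟨h1, h3 ▸ hh2⟩
  · intro i j hbi hbj
    obtain ⟨h1, h2⟩ := of_decide_eq_true hbi
    obtain ⟨h3, h4⟩ := of_decide_eq_true hbj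
    exact (hE i j).2 ⟨h1, h3, h2.trans h4.symm⟩
  · intro i pol hl
    have := htest _ hl
    simp only [atomSat] at this
    rw [Bool.eq_iff_iff, ← this]
    simp [actualb]
  · intro i j pol hl
    have := htest _ hl
    simp only [atomSat] at this
    rw [Bool.eq_iff_iff, ← this]
    exact (hE i j).symm
  · cases hop' : tA.op with
    | nop => trivial
    | drop n => rw [hop'] at hop; exact hop
    | lift n =>
        rw [hop'] at hop
        obtain ⟨hl1, hl2⟩ := hop
        refine ⟨hl1, ?_⟩
        simp only [actualb]
        rw [decide_eq_true_eq]
        exact ⟨by omega, hl2⟩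

lemma step_AtoB {A : PT Q Sg Gm k} (hk : 0 < k) (L : List (PTrans Q Sg k))
    {u : List Sg} {tA : PTrans Q Sg k} {C C' : Config Q}
    (hst : A.StepT u tA C C') {E : Fin k → Fin k → Bool} (hE : Encodes C.peb E) :
    (Bof A hk L).StepT u (Ftr hk (L.idxOf tA) tA E (actualb k C.peb C.h) C.peb.length)
      ⟨(C.q, E), C.peb, C.h⟩ ⟨(C'.q, upd E (actualb k C.peb C.h) tA.op), C'.peb, C'.h⟩ ∧
    Encodes C'.peb (upd E (actualb k C.peb C.h) tA.op) := by
  obtain ⟨hδ, hsrc, hhead, hlen, hletter, htest, hop, htgt, hpeb, hh⟩ := hst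
  have hG : Good tA E (actualb k C.peb C.h) C.peb.length :=
    mk_good ⟨hδ, hsrc, hhead, hlen, hletter, htest, hop, htgt, hpeb, hh⟩ hE
  constructor
  · refine ⟨⟨tA, hδ, E, _, _, hG, rfl⟩, ?_, hhead, hlen, hletter, ?_, hop, ?_, hpeb, ?_⟩
    · show (C.q, E) = (tA.src, E); rw [hsrc]
    · exact testSat_Ftr_actual
    · show (C'.q, _) = (tA.tgt, _); rw [htgt]
    · exact hh
  · rw [hpeb]
    exact encodes_upd hE hop

lemma step_BtoA {A : PT Q Sg Gm k} {hk : 0 < k} {L : List (PTrans Q Sg k)}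
    (hL : ∀ t, t ∈ A.δ → t ∈ L) {u : List Sg} {tB : PTrans (Q × (Fin k → Fin k → Bool)) Sg k}
    {CB CB' : Config (Q × (Fin k → Fin k → Bool))}
    (hst : (Bof A hk L).StepT u tB CB CB') (hE : Encodes CB.peb CB.q.2) :
    ∃ tA, A.StepT u tA ⟨CB.q.1, CB.peb, CB.h⟩ ⟨CB'.q.1, CB'.peb, CB'.h⟩ ∧
      (Bof A hk L).μ tB = A.μ tA ∧ Encodes CB'.peb CB'.q.2 := by
  obtain ⟨hδ, hsrc, hhead, hlen, hletter, htest, hop, htgt, hpeb, hh⟩ := hst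
  obtain ⟨tA, htA, E, b, m, hG, rfl⟩ := hδ
  have hsrc2 : CB.q.2 = E := by rw [hsrc]; rfl
  rw [hsrc2] at hE
  have hm : m = CB.peb.length := by
    refine diag_unique hG.1 hlen ?_
    intro i
    rw [← hG.2.1 i, encodes_diag hE i]
  have hext := testSat_Ftr_extract htest
  have hb : b = actualb k CB.peb CB.h := by
    funext i
    by_cases hi : (i : ℕ) < m
    · rw [Bool.eq_iff_iff]
      simp only [actualb, decide_eq_true_eq]
      exact (hext i hi).symm
    · have hbi : b i = false := by
        rw [Bool.eq_false_iff]; intro hc; exact hi (hG.2.2.2.1 i hc)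
      have h2 : actualb k CB.peb CB.h i = false := by
        simp only [actualb, decide_eq_false_iff_not]
        rintro ⟨hc, -⟩
        omega
      rw [hbi, h2]
  have hReal : Realizes CB.peb E b CB.h := by
    refine ⟨hE, ?_⟩
    intro i
    by_cases hi : (i : ℕ) < m
    · exact hext i hi
    · constructor
      · rintro ⟨hc, -⟩; omega
      · intro hc; exact absurd (hG.2.2.2.1 i hc) hi
  refine ⟨tA, ⟨htA, ?_, hhead, hlen, hletter, realizes_testSat hG hReal, hop, ?_, hpeb, hh⟩,
    ?_, ?_⟩
  · rw [hsrc]; rfl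
  · rw [htgt]; rfl
  · exact Bof_mu (hL _ htA) hG
  · rw [htgt]
    show Encodes CB'.peb (upd E b tA.op)
    rw [hb, hpeb]
    exact encodes_upd hE hop

lemma run_AtoB {A : PT Q Sg Gm k} (hk : 0 < k) (L : List (PTrans Q Sg k))
    (hL : ∀ t, t ∈ A.δ → t ∈ L) {u : List Sg} {C C'' : Config Q} {v : List Gm}
    (hr : A.Run u C C'' v) :
    ∀ E, Encodes C.peb E → ∃ E'', Encodes C''.peb E'' ∧
      (Bof A hk L).Run u ⟨(C.q, E), C.peb, C.h⟩ ⟨(C''.q, E''), C''.peb, C''.h⟩ v := by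
  induction hr with
  | refl C => exact fun E hE => ⟨E, hE, .refl _⟩
  | @step C C' C'' t v hst hrun ih =>
      intro E hE
      obtain ⟨hstep, hE'⟩ := step_AtoB hk L hst hE
      obtain ⟨E'', hE'', hrunB⟩ := ih _ hE'
      refine ⟨E'', hE'', ?_⟩
      have hres := PT.Run.step _ hstep hrunB
      rwa [Bof_mu (hL _ hst.1) (mk_good hst hE)] at hres

lemma run_BtoA {A : PT Q Sg Gm k} {hk : 0 < k} {L : List (PTrans Q Sg k)}
    (hL : ∀ t, t ∈ A.δ → t ∈ L) {u : List Sg}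
    {CB CB'' : Config (Q × (Fin k → Fin k → Bool))} {v : List Gm}
    (hr : (Bof A hk L).Run u CB CB'' v) :
    Encodes CB.peb CB.q.2 →
      A.Run u ⟨CB.q.1, CB.peb, CB.h⟩ ⟨CB''.q.1, CB''.peb, CB''.h⟩ v := by
  induction hr with
  | refl C => exact fun _ => .refl _
  | @step C C' C'' t v hst hrun ih =>
      intro hE
      obtain ⟨tA, hstA, hmu, hE'⟩ := step_BtoA hL hst hE
      rw [hmu]
      exact .step tA hstA (ih hE')

lemma sem_Bof {A : PT Q Sg Gm k} (hk : 0 < k) (L : List (PTrans Q Sg k))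
    (hL : ∀ t, t ∈ A.δ → t ∈ L) : (Bof A hk L).Sem = A.Sem := by
  ext ⟨u, v⟩
  simp only [PT.Sem, Set.mem_setOf_eq]
  constructor
  · intro hr
    exact run_BtoA hL hr encodes_nil
  · intro hr
    obtain ⟨E'', hE'', hrB⟩ := run_AtoB hk L hL hr (fun _ _ => false) encodes_nil
    have hE : E'' = fun _ _ => false := encodes_nil' hE''
    rw [hE] at hrB
    exact hrB

lemma wf_Bof {A : PT Q Sg Gm k} (hk : 0 < k) (L : List (PTrans Q Sg k))
    (hA : A.WF) : (Bof A hk L).WF := by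
  obtain ⟨h1, h2, h3, h4, h5⟩ := hA
  refine ⟨h1, h2, ?_, ?_, ?_⟩
  · intro hc
    exact h3 (congrArg Prod.fst hc)
  · rintro tB ⟨tA, htA, E, b, m, hG, rfl⟩
    exact ⟨fun hc => (h4 tA htA).1 (congrArg Prod.fst hc),
      fun hc => (h4 tA htA).2 (congrArg Prod.fst hc)⟩
  · have hsub : (Bof A hk L).δ ⊆
        (fun x : PTrans Q Sg k × (Fin k → Fin k → Bool) × (Fin k → Bool) × ℕ =>
          Ftr hk (L.idxOf x.1) x.1 x.2.1 x.2.2.1 x.2.2.2) ''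
        (A.δ ×ˢ (Set.univ : Set (Fin k → Fin k → Bool)) ×ˢ
          (Set.univ : Set (Fin k → Bool)) ×ˢ Set.Iic k) := by
      rintro tB ⟨tA, htA, E, b, m, hG, rfl⟩
      exact ⟨(tA, E, b, m), ⟨htA, trivial, trivial, hG.1⟩, rfl⟩
    exact Set.Finite.subset
      ((h5.prod (Set.finite_univ.prod (Set.finite_univ.prod (Set.finite_Iic k)))).image _) hsub

lemma basic_Bof {A : PT Q Sg Gm k} (hk : 0 < k) (L : List (PTrans Q Sg k)) :
    (Bof A hk L).Basic := by
  rintro tB ⟨tA, htA, E, b, m, hG, rfl⟩ l hl i j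
  simp only [Ftr, List.mem_append, List.mem_replicate] at hl
  rcases hl with hl | ⟨-, hl⟩
  · obtain ⟨i', -, rfl⟩ := mem_ctest.1 hl
    simp
  · rw [hl]
    simp

/-- Assemble a step of `A` at a configuration realizing `(E, b)`. -/
lemma stepT_of_realization {A : PT Q Sg Gm k} {u : List Sg} {tA : PTrans Q Sg k}
    (htA : tA ∈ A.δ) {E : Fin k → Fin k → Bool} {b : Fin k → Bool} {m : ℕ}
    (hG : Good tA E b m) {p : List ℕ} {h : ℕ}
    (hplen : p.length = m) (hReal : Realizes p E b h)
    (hhead : h ≤ u.length) (hletter : letterAt u h = tA.letter) :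
    A.StepT u tA ⟨tA.src, p, h⟩
      ⟨tA.tgt, opApply p h tA.op, nextHead u.length h (A.dir tA.tgt)⟩ := by
  have hmatch := hG.2.2.2.2.2.2.2.2
  refine ⟨htA, rfl, hhead, by rw [hplen]; exact hG.1, hletter,
    realizes_testSat hG hReal, ?_, rfl, rfl, rfl⟩
  cases hop : tA.op with
  | nop => trivial
  | drop n =>
      rw [hop] at hmatch
      show p.length = (n : ℕ)
      rw [hplen, hmatch]
  | lift n =>
      rw [hop] at hmatch
      obtain ⟨hm, hbn⟩ := hmatch
      refine ⟨by rw [hplen, hm], ?_⟩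
      exact ((hReal.2 n).2 hbn).2

lemma det_Bof {A : PT Q Sg Gm k} {hk : 0 < k} {L : List (PTrans Q Sg k)}
    (hdet : A.Deterministic) : (Bof A hk L).Deterministic := by
  intro u tB1 tB2 C h1 h2
  obtain ⟨C1', hst1⟩ := h1
  obtain ⟨C2', hst2⟩ := h2
  obtain ⟨hδ1, hsrc1, hhead1, hlen1, hletter1, htest1, hop1, -, -, -⟩ := hst1
  obtain ⟨hδ2, hsrc2, hhead2, hlen2, hletter2, htest2, hop2, -, -, -⟩ := hst2
  obtain ⟨tA1, htA1, E1, b1, m1, hG1, rfl⟩ := hδ1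
  obtain ⟨tA2, htA2, E2, b2, m2, hG2, rfl⟩ := hδ2
  have hq := hsrc1.symm.trans hsrc2
  have hE : E1 = E2 := congrArg Prod.snd hq
  have hqsrc : tA1.src = tA2.src := congrArg Prod.fst hq
  have hm : m1 = m2 := by
    refine diag_unique hG1.1 hG2.1 ?_
    intro i
    rw [← hG1.2.1 i, hE, hG2.2.1 i]
  have hb : b1 = b2 := by
    funext i
    by_cases hi : (i : ℕ) < m1
    · have e1 := testSat_Ftr_extract htest1 i hi
      have e2 := testSat_Ftr_extract htest2 i (hm ▸ hi)
      rw [Bool.eq_iff_iff, ← e1, ← e2]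
    · have f1 : b1 i = false := by
        rw [Bool.eq_false_iff]; exact fun hc => hi (hG1.2.2.2.1 i hc)
      have f2 : b2 i = false := by
        rw [Bool.eq_false_iff]; exact fun hc => hi (hm ▸ hG2.2.2.2.1 i hc)
      rw [f1, f2]
  obtain ⟨p, hplen, hReal⟩ := exists_realizes hG1.1 hG1.2.2.1 hG1.2.2.2.1
    hG1.2.2.2.2.1 hG1.2.2.2.2.2.1 C.h
  have st1 := stepT_of_realization htA1 hG1 hplen hReal hhead1 hletter1
  have hReal2 : Realizes p E2 b2 C.h := by rw [← hE, ← hb]; exact hReal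
  have st2 := stepT_of_realization htA2 hG2 (hplen.trans hm) hReal2 hhead2 hletter2
  have st2' : A.StepT u tA2 ⟨tA1.src, p, C.h⟩
      ⟨tA2.tgt, opApply p C.h tA2.op, nextHead u.length C.h (A.dir tA2.tgt)⟩ := by
    rw [hqsrc]; exact st2
  have hAA : tA1 = tA2 := hdet u tA1 tA2 ⟨tA1.src, p, C.h⟩ ⟨_, st1⟩ ⟨_, st2'⟩
  rw [hAA, hE, hb, hm]

/-- Head pattern at the target of a step, as a function of the source pattern. -/
def ceff (b : Fin k → Bool) : PebOp k → (Fin k → Bool)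
  | .nop => b
  | .drop n => fun j => if j = n then true else b j
  | .lift n => fun j => if j = n then false else b j

/-- Number of pebbles after an operation. -/
def mAfter (m : ℕ) : PebOp k → ℕ
  | .nop => m
  | .drop n => (n : ℕ) + 1
  | .lift n => (n : ℕ)

lemma good_range {tA : PTrans Q Sg k} {E : Fin k → Fin k → Bool} {b : Fin k → Bool} {m : ℕ}
    (hG : Good tA E b m) : ∀ i j : Fin k, E i j = true → (i : ℕ) < m ∧ (j : ℕ) < m := by
  obtain ⟨p0, hl, hp0⟩ := hG.2.2.1
  intro i j hij
  obtain ⟨a1, a2, -⟩ := (hp0 i j).1 hij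
  rw [hl] at a1 a2
  exact ⟨a1, a2⟩

lemma good_symm {tA : PTrans Q Sg k} {E : Fin k → Fin k → Bool} {b : Fin k → Bool} {m : ℕ}
    (hG : Good tA E b m) : ∀ i j : Fin k, E i j = E j i := by
  obtain ⟨p0, hl, hp0⟩ := hG.2.2.1
  intro i j
  rw [Bool.eq_iff_iff, hp0 i j, hp0 j i]
  exact ⟨fun ⟨a, c, d⟩ => ⟨c, a, d.symm⟩, fun ⟨a, c, d⟩ => ⟨c, a, d.symm⟩⟩

lemma good_bfalse {tA : PTrans Q Sg k} {E : Fin k → Fin k → Bool} {b : Fin k → Bool} {m : ℕ}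
    (hG : Good tA E b m) {i : Fin k} (hi : ¬ (i : ℕ) < m) : b i = false := by
  rw [Bool.eq_false_iff]
  exact fun hc => hi (hG.2.2.2.1 i hc)

lemma diag_upd {E : Fin k → Fin k → Bool} {b : Fin k → Bool} {m : ℕ}
    (hdiag : ∀ i : Fin k, (E i i = true ↔ (i : ℕ) < m)) (op : PebOp k)
    (hop : match op with
      | .nop => True | .drop n => m = (n : ℕ) | .lift n => m = (n : ℕ) + 1) :
    ∀ i : Fin k, (upd E b op i i = true ↔ (i : ℕ) < mAfter m op) := by
  intro i
  cases op with
  | nop => exact hdiag i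
  | drop n =>
      by_cases hi : i = n
      · rw [hi]; simp [upd, mAfter]
      · have hv : (i : ℕ) ≠ (n : ℕ) := fun hc => hi (Fin.ext hc)
        simp only [upd, if_neg hi, mAfter, hdiag i]
        omega
  | lift n =>
      by_cases hi : i = n
      · rw [hi]; simp [upd, mAfter]
      · have hv : (i : ℕ) ≠ (n : ℕ) := fun hc => hi (Fin.ext hc)
        have : ¬(i = n ∨ i = n) := by tauto
        simp only [upd, if_neg this, mAfter, hdiag i]
        omega

lemma mAfter_le {tA : PTrans Q Sg k} {E : Fin k → Fin k → Bool} {b : Fin k → Bool} {m : ℕ}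
    (hG : Good tA E b m) : mAfter m tA.op ≤ k := by
  have hmatch := hG.2.2.2.2.2.2.2.2
  cases hop : tA.op with
  | nop => exact hG.1
  | drop n => exact n.isLt
  | lift n => exact le_of_lt n.isLt

lemma good_match_m {tA : PTrans Q Sg k} {E : Fin k → Fin k → Bool} {b : Fin k → Bool} {m : ℕ}
    (hG : Good tA E b m) :
    match tA.op with
      | .nop => True | .drop n => m = (n : ℕ) | .lift n => m = (n : ℕ) + 1 := by
  have hmatch := hG.2.2.2.2.2.2.2.2
  cases hop : tA.op with
  | nop => trivial
  | drop n => rw [hop] at hmatch; exact hmatch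
  | lift n => rw [hop] at hmatch; exact hmatch.1

lemma ceff_canonical {tA : PTrans Q Sg k} {E : Fin k → Fin k → Bool} {b : Fin k → Bool}
    {m : ℕ} (hG : Good tA E b m) :
    ∀ j : Fin k, ¬ ((j : ℕ) < mAfter m tA.op) → ceff b tA.op j = false := by
  have hmatch := good_match_m hG
  intro j hj
  cases hop : tA.op with
  | nop =>
      rw [hop] at hj
      exact good_bfalse hG hj
  | drop n =>
      rw [hop] at hj hmatch
      simp only [mAfter] at hj
      have hjn : j ≠ n := fun hc => by rw [hc] at hj; omega
      simp only [ceff, if_neg hjn]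
      exact good_bfalse hG (by omega)
  | lift n =>
      rw [hop] at hj hmatch
      simp only [mAfter] at hj
      by_cases hjn : j = n
      · simp [ceff, hjn]
      · have hv : (j : ℕ) ≠ (n : ℕ) := fun hc => hjn (Fin.ext hc)
        simp only [ceff, if_neg hjn]
        exact good_bfalse hG (by omega)

lemma ceff_actual {tA : PTrans Q Sg k} {E : Fin k → Fin k → Bool} {b : Fin k → Bool}
    {m : ℕ} (hG : Good tA E b m) {p p' : List ℕ} {h : ℕ}
    (hext : ∀ j : Fin k, (j : ℕ) < m → (((j : ℕ) < p.length ∧ p.getD j 0 = h) ↔ b j = true))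
    (hop : opEnabled p h tA.op) (hp' : p' = opApply p h tA.op) :
    ∀ j : Fin k, (j : ℕ) < mAfter m tA.op → ceff b tA.op j = actualb k p' h j := by
  have hmatch := good_match_m hG
  intro j hj
  cases hopc : tA.op with
  | nop =>
      rw [hopc] at hj hp'
      simp only [opApply] at hp'
      subst hp'
      simp only [ceff, actualb]
      rw [Bool.eq_iff_iff, decide_eq_true_eq, ← hext j hj]
  | drop n =>
      rw [hopc] at hj hp' hop hmatch
      have hplen : p.length = (n : ℕ) := hop
      simp only [opApply] at hp'
      subst hp'
      simp only [mAfter] at hj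
      by_cases hjn : j = n
      · rw [hjn]
        have hone : ceff b (PebOp.drop n) n = true := by simp [ceff]
        rw [hone]
        simp only [actualb]
        rw [eq_comm, decide_eq_true_eq]
        refine ⟨by simp [hplen], ?_⟩
        rw [← hplen]
        exact getD_concat_self
      · have hv : (j : ℕ) ≠ (n : ℕ) := fun hc => hjn (Fin.ext hc)
        have hjlt : (j : ℕ) < (n : ℕ) := by omega
        simp only [ceff, if_neg hjn, actualb]
        rw [Bool.eq_iff_iff, decide_eq_true_eq, ← hext j (by omega)]
        rw [getD_concat_lt (by omega)]
        simp only [List.length_append, List.length_singleton, hplen]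
        constructor
        · rintro ⟨-, e⟩; exact ⟨by omega, e⟩
        · rintro ⟨-, e⟩; exact ⟨by omega, e⟩
  | lift n =>
      rw [hopc] at hj hp' hop hmatch
      obtain ⟨hplen, htop⟩ := hop
      simp only [opApply] at hp'
      subst hp'
      simp only [mAfter] at hj
      have hjn : j ≠ n := fun hc => by rw [hc] at hj; omega
      have hdl : p.dropLast.length = (n : ℕ) := by simp [hplen]
      simp only [ceff, if_neg hjn, actualb]
      rw [Bool.eq_iff_iff, decide_eq_true_eq, ← hext j (by omega), hdl,
        getD_dropLast' (by omega)]
      constructor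
      · rintro ⟨-, e⟩; exact ⟨by omega, e⟩
      · rintro ⟨-, e⟩; exact ⟨by omega, e⟩

/-- From a realization of the target pattern, reconstruct a source configuration. -/
lemma rev_transfer {tA : PTrans Q Sg k} {E : Fin k → Fin k → Bool} {b : Fin k → Bool}
    {m : ℕ} (hG : Good tA E b m) {h : ℕ} {p' : List ℕ} (hp'k : p'.length ≤ k)
    (hReal' : Realizes p' (upd E b tA.op) (ceff b tA.op) h) :
    ∃ p : List ℕ, p.length = m ∧ opApply p h tA.op = p' ∧ opEnabled p h tA.op ∧
      Realizes p E b h := by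
  have hmatch := good_match_m hG
  have hE' := hReal'.1
  have hpat := hReal'.2
  cases hopc : tA.op with
  | nop =>
      rw [hopc] at hE' hpat hmatch
      simp only [upd] at hE'
      simp only [ceff] at hpat
      have hlen : p'.length = m := by
        refine diag_unique hp'k hG.1 ?_
        intro i
        rw [← encodes_diag hE' i, hG.2.1 i]
      exact ⟨p', hlen, rfl, trivial, hE', hpat⟩
  | drop n =>
      rw [hopc] at hE' hpat hmatch
      have hlen' : p'.length = (n : ℕ) + 1 := by
        refine diag_unique hp'k n.isLt ?_
        intro i
        rw [← encodes_diag hE' i]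
        exact diag_upd hG.2.1 (.drop n) hmatch i
      have hcn : ceff b (PebOp.drop n) n = true := by simp [ceff]
      have htop : p'.getD n 0 = h := ((hpat n).2 hcn).2
      have hne : p' ≠ [] := by
        intro hc; rw [hc] at hlen'; simp at hlen'
      have happ : p'.dropLast ++ [h] = p' := by
        have hgl : p'.getLast hne = h := by
          rw [List.getLast_eq_getElem, ← List.getD_eq_getElem p' 0 (by omega)]
          rw [hlen']
          simpa using htop
        rw [← hgl]
        exact List.dropLast_append_getLast hne
      have hdlen : p'.dropLast.length = (n : ℕ) := by simp [hlen']
      have hgd : ∀ a : ℕ, a < (n : ℕ) → p'.dropLast.getD a 0 = p'.getD a 0 := by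
        intro a ha; exact getD_dropLast' (by omega)
      refine ⟨p'.dropLast, hdlen.trans hmatch.symm, happ, hdlen, ?_, ?_⟩
      · -- Encodes p'.dropLast E
        intro i j
        rw [hdlen]
        constructor
        · intro hij
          obtain ⟨hi, hj⟩ := good_range hG i j hij
          rw [hmatch] at hi hj
          have hi' : i ≠ n := fun hc => by rw [hc] at hi; omega
          have hj' : j ≠ n := fun hc => by rw [hc] at hj; omega
          have hEij : upd E b (PebOp.drop n) i j = true := by
            simpa only [upd, if_neg hi', if_neg hj'] using hij
          obtain ⟨-, -, heq⟩ := (hE' i j).1 hEij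
          rw [hgd i hi, hgd j hj]
          exact ⟨hi, hj, heq⟩
        · rintro ⟨hi, hj, heq⟩
          have hi' : i ≠ n := fun hc => by rw [hc] at hi; omega
          have hj' : j ≠ n := fun hc => by rw [hc] at hj; omega
          rw [hgd i hi, hgd j hj] at heq
          have hEij : upd E b (PebOp.drop n) i j = true :=
            (hE' i j).2 ⟨by omega, by omega, heq⟩
          simpa only [upd, if_neg hi', if_neg hj'] using hEij
      · -- pattern
        intro i
        rw [hdlen]
        by_cases hi : (i : ℕ) < (n : ℕ)
        · have hi' : i ≠ n := fun hc => by rw [hc] at hi; omega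
          have hci : ceff b (PebOp.drop n) i = b i := by simp [ceff, hi']
          rw [hgd i hi, ← hci, ← hpat i]
          constructor
          · rintro ⟨-, e⟩; exact ⟨by omega, e⟩
          · rintro ⟨-, e⟩; exact ⟨hi, e⟩
        · rw [good_bfalse hG (by omega)]
          simp only [Bool.false_eq_true, iff_false]
          rintro ⟨hc, -⟩; omega
  | lift n =>
      rw [hopc] at hE' hpat hmatch
      have hm : m = (n : ℕ) + 1 := hmatch
      have hbn : b n = true := by
        have h9 := hG.2.2.2.2.2.2.2.2
        rw [hopc] at h9
        exact h9.2
      have hlen' : p'.length = (n : ℕ) := by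
        refine diag_unique hp'k (le_of_lt n.isLt) ?_
        intro i
        rw [← encodes_diag hE' i]
        exact diag_upd hG.2.1 (.lift n) hm i
      have hgd : ∀ a : ℕ, a < (n : ℕ) → (p' ++ [h]).getD a 0 = p'.getD a 0 := by
        intro a ha; exact getD_concat_lt (by omega)
      have hgn : (p' ++ [h]).getD n 0 = h := by rw [← hlen']; exact getD_concat_self
      have hplen : (p' ++ [h]).length = (n : ℕ) + 1 := by simp [hlen']
      refine ⟨p' ++ [h], hplen.trans hm.symm, List.dropLast_concat .., ⟨hplen, hgn⟩, ?_, ?_⟩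
      · -- Encodes (p' ++ [h]) E
        intro i j
        rw [hplen]
        constructor
        · intro hij
          obtain ⟨hi, hj⟩ := good_range hG i j hij
          rw [hm] at hi hj
          refine ⟨hi, hj, ?_⟩
          by_cases hi' : i = n <;> by_cases hj' : j = n
          · rw [hi', hj']
          · have hvj : (j : ℕ) < (n : ℕ) := by
              rcases Nat.lt_or_ge (j : ℕ) (n : ℕ) with hlt | hge
              · exact hlt
              · exact absurd (Fin.ext (by omega : (j : ℕ) = (n : ℕ))) hj'
            have hbj : b j = true := by
              rw [← hG.2.2.2.2.1 i j hij, hi']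
              exact hbn
            have hcj : ceff b (PebOp.lift n) j = true := by
              simp only [ceff, if_neg hj']; exact hbj
            rw [hi', hgn, hgd j hvj]
            exact (((hpat j).2 hcj).2).symm
          · have hvi : (i : ℕ) < (n : ℕ) := by
              rcases Nat.lt_or_ge (i : ℕ) (n : ℕ) with hlt | hge
              · exact hlt
              · exact absurd (Fin.ext (by omega : (i : ℕ) = (n : ℕ))) hi'
            have hbi : b i = true := by
              rw [hG.2.2.2.2.1 i j hij, hj']
              exact hbn
            have hci : ceff b (PebOp.lift n) i = true := by
              simp only [ceff, if_neg hi']; exact hbi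
            rw [hj', hgn, hgd i hvi]
            exact ((hpat i).2 hci).2
          · have hvi : (i : ℕ) < (n : ℕ) := by
              rcases Nat.lt_or_ge (i : ℕ) (n : ℕ) with hlt | hge
              · exact hlt
              · exact absurd (Fin.ext (by omega : (i : ℕ) = (n : ℕ))) hi'
            have hvj : (j : ℕ) < (n : ℕ) := by
              rcases Nat.lt_or_ge (j : ℕ) (n : ℕ) with hlt | hge
              · exact hlt
              · exact absurd (Fin.ext (by omega : (j : ℕ) = (n : ℕ))) hj'
            have hEij : upd E b (PebOp.lift n) i j = true := by
              have : ¬(i = n ∨ j = n) := by tauto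
              simpa only [upd, if_neg this] using hij
            obtain ⟨-, -, heq⟩ := (hE' i j).1 hEij
            rw [hgd i hvi, hgd j hvj]
            exact heq
        · rintro ⟨hi, hj, heq⟩
          by_cases hi' : i = n <;> by_cases hj' : j = n
          · rw [hi', hj']
            exact (hG.2.1 n).2 (by omega)
          · have hvj : (j : ℕ) < (n : ℕ) := by
              rcases Nat.lt_or_ge (j : ℕ) (n : ℕ) with hlt | hge
              · exact hlt
              · exact absurd (Fin.ext (by omega : (j : ℕ) = (n : ℕ))) hj'
            rw [hi', hgn, hgd j hvj] at heq
            have hpj : (j : ℕ) < p'.length ∧ p'.getD j 0 = h := ⟨by omega, heq.symm⟩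
            have hcj : ceff b (PebOp.lift n) j = true := (hpat j).1 hpj
            have hbj : b j = true := by
              simpa only [ceff, if_neg hj'] using hcj
            rw [hi']
            rw [good_symm hG n j]
            exact hG.2.2.2.2.2.1 j n hbj hbn
          · have hvi : (i : ℕ) < (n : ℕ) := by
              rcases Nat.lt_or_ge (i : ℕ) (n : ℕ) with hlt | hge
              · exact hlt
              · exact absurd (Fin.ext (by omega : (i : ℕ) = (n : ℕ))) hi'
            rw [hj', hgn, hgd i hvi] at heq
            have hpi : (i : ℕ) < p'.length ∧ p'.getD i 0 = h := ⟨by omega, heq⟩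
            have hci : ceff b (PebOp.lift n) i = true := (hpat i).1 hpi
            have hbi : b i = true := by
              simpa only [ceff, if_neg hi'] using hci
            rw [hj']
            exact hG.2.2.2.2.2.1 i n hbi hbn
          · have hvi : (i : ℕ) < (n : ℕ) := by
              rcases Nat.lt_or_ge (i : ℕ) (n : ℕ) with hlt | hge
              · exact hlt
              · exact absurd (Fin.ext (by omega : (i : ℕ) = (n : ℕ))) hi'
            have hvj : (j : ℕ) < (n : ℕ) := by
              rcases Nat.lt_or_ge (j : ℕ) (n : ℕ) with hlt | hge
              · exact hlt
              · exact absurd (Fin.ext (by omega : (j : ℕ) = (n : ℕ))) hj'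
            rw [hgd i hvi, hgd j hvj] at heq
            have hEij : upd E b (PebOp.lift n) i j = true :=
              (hE' i j).2 ⟨by omega, by omega, heq⟩
            have : ¬(i = n ∨ j = n) := by tauto
            simpa only [upd, if_neg this] using hEij
      · -- pattern
        intro i
        rw [hplen]
        by_cases hi' : i = n
        · rw [hi']
          simp only [hgn]
          constructor
          · intro _; exact hbn
          · intro _; exact ⟨by omega, trivial⟩
        · by_cases hvi : (i : ℕ) < (n : ℕ)
          · have hci : ceff b (PebOp.lift n) i = b i := by simp [ceff, hi']
            rw [hgd i hvi, ← hci, ← hpat i]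
            constructor
            · rintro ⟨-, e⟩; exact ⟨by omega, e⟩
            · rintro ⟨-, e⟩; exact ⟨by omega, e⟩
          · have hge : (i : ℕ) > (n : ℕ) := by
              rcases Nat.lt_or_ge (n : ℕ) (i : ℕ) with hlt | hge2
              · exact hlt
              · exact absurd (Fin.ext (by omega : (i : ℕ) = (n : ℕ))) hi'
            rw [good_bfalse hG (by omega)]
            simp only [Bool.false_eq_true, iff_false]
            rintro ⟨hc, -⟩
            omega

lemma nextHead_inj {len h1 h2 : ℕ} (hh1 : h1 ≤ len) (hh2 : h2 ≤ len) {d : SignType}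
    (h : nextHead len h1 d = nextHead len h2 d) : h1 = h2 := by
  cases d <;> simp only [nextHead] at h
  case zero => exact h
  case neg =>
    have e : ∀ a, a ≤ len → (a + len) % (len + 1) = if a = 0 then len else a - 1 := by
      intro a ha
      split
      · rename_i h0
        rw [h0, Nat.zero_add, Nat.mod_eq_of_lt (by omega)]
      · have : a + len = (len + 1) + (a - 1) := by omega
        rw [this, Nat.add_mod_left, Nat.mod_eq_of_lt (by omega)]
    rw [e h1 hh1, e h2 hh2] at h
    split at h <;> split at h <;> omega
  case pos =>
    have e : ∀ a, a ≤ len → (a + 1) % (len + 1) = if a = len then 0 else a + 1 := by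
      intro a ha
      split
      · rename_i h0
        rw [h0]
        simp
      · rw [Nat.mod_eq_of_lt (by omega)]
    rw [e h1 hh1, e h2 hh2] at h
    split at h <;> split at h <;> omega

lemma opEnabled_of_realization {tA : PTrans Q Sg k} {E : Fin k → Fin k → Bool}
    {b : Fin k → Bool} {m : ℕ} (hG : Good tA E b m) {p : List ℕ} {h : ℕ}
    (hplen : p.length = m) (hReal : Realizes p E b h) : opEnabled p h tA.op := by
  have hmatch := hG.2.2.2.2.2.2.2.2
  cases hop : tA.op with
  | nop => trivial
  | drop n =>
      rw [hop] at hmatch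
      show p.length = (n : ℕ)
      rw [hplen, hmatch]
  | lift n =>
      rw [hop] at hmatch
      exact ⟨by rw [hplen, hmatch.1], ((hReal.2 n).2 hmatch.2).2⟩

lemma length_opApply {p : List ℕ} {h : ℕ} :
    ∀ op : PebOp k, opEnabled p h op → (opApply p h op).length = mAfter p.length op := by
  intro op hop
  cases op with
  | nop => rfl
  | drop n =>
      have : p.length = (n : ℕ) := hop
      simp [opApply, mAfter, this]
  | lift n =>
      have : p.length = (n : ℕ) + 1 := hop.1
      simp [opApply, mAfter, this]

lemma revdet_Bof {A : PT Q Sg Gm k} {hk : 0 < k} {L : List (PTrans Q Sg k)}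
    (hdet : A.RevDeterministic) : (Bof A hk L).RevDeterministic := by
  intro u tB1 tB2 C' h1 h2
  obtain ⟨C1, hst1⟩ := h1
  obtain ⟨C2, hst2⟩ := h2
  obtain ⟨hδ1, hsrc1, hhead1, hlen1, hletter1, htest1, hop1, htgt1, hpeb1, hh1⟩ := hst1
  obtain ⟨hδ2, hsrc2, hhead2, hlen2, hletter2, htest2, hop2, htgt2, hpeb2, hh2⟩ := hst2
  obtain ⟨tA1, htA1, E1, b1, m1, hG1, rfl⟩ := hδ1
  obtain ⟨tA2, htA2, E2, b2, m2, hG2, rfl⟩ := hδ2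
  have htgt1' : tA1.tgt = C'.q.1 := (congrArg Prod.fst htgt1).symm
  have htgt2' : tA2.tgt = C'.q.1 := (congrArg Prod.fst htgt2).symm
  have hupd1 : upd E1 b1 tA1.op = C'.q.2 := (congrArg Prod.snd htgt1).symm
  have hupd2 : upd E2 b2 tA2.op = C'.q.2 := (congrArg Prod.snd htgt2).symm
  have hh1' : C'.h = nextHead u.length C1.h (A.dir tA1.tgt) := hh1
  have hh2' : C'.h = nextHead u.length C2.h (A.dir tA2.tgt) := hh2
  have hd : A.dir tA1.tgt = A.dir tA2.tgt := by rw [htgt1', htgt2']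
  have h1h2 : C1.h = C2.h := by
    have hx := hh1'.symm.trans hh2'
    rw [hd] at hx
    exact nextHead_inj hhead1 hhead2 hx
  have hch : C2.h = C1.h := h1h2.symm
  rw [hch] at hhead2 hletter2 htest2 hop2 hpeb2 hh2'
  have hm' : mAfter m1 tA1.op = mAfter m2 tA2.op := by
    refine diag_unique (mAfter_le hG1) (mAfter_le hG2) ?_
    intro i
    rw [← diag_upd hG1.2.1 tA1.op (good_match_m hG1) i,
      ← diag_upd hG2.2.1 tA2.op (good_match_m hG2) i, hupd1, hupd2]
  have ext1 := testSat_Ftr_extract htest1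
  have ext2 := testSat_Ftr_extract htest2
  have hceq : ceff b1 tA1.op = ceff b2 tA2.op := by
    funext j
    by_cases hj : (j : ℕ) < mAfter m1 tA1.op
    · rw [ceff_actual hG1 ext1 hop1 hpeb1 j hj,
        ceff_actual hG2 ext2 hop2 hpeb2 j (hm' ▸ hj)]
    · rw [ceff_canonical hG1 j hj, ceff_canonical hG2 j (by rw [← hm']; exact hj)]
  -- synthetic realization of the target
  obtain ⟨p1, hp1len, hReal1⟩ := exists_realizes hG1.1 hG1.2.2.1 hG1.2.2.2.1
    hG1.2.2.2.2.1 hG1.2.2.2.2.2.1 C1.h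
  have hopEn1 : opEnabled p1 C1.h tA1.op := opEnabled_of_realization hG1 hp1len hReal1
  set p' : List ℕ := opApply p1 C1.h tA1.op with hp'def
  have hp'len : p'.length = mAfter m1 tA1.op := by
    rw [hp'def, length_opApply tA1.op hopEn1, hp1len]
  have hextR : ∀ j : Fin k, (j : ℕ) < m1 →
      (((j : ℕ) < p1.length ∧ p1.getD j 0 = C1.h) ↔ b1 j = true) :=
    fun j _ => hReal1.2 j
  have hpattern : ∀ j : Fin k,
      (((j : ℕ) < p'.length ∧ p'.getD j 0 = C1.h) ↔ ceff b1 tA1.op j = true) := by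
    intro j
    by_cases hj : (j : ℕ) < mAfter m1 tA1.op
    · rw [ceff_actual hG1 hextR hopEn1 hp'def j hj]
      simp only [actualb]
      rw [decide_eq_true_eq]
    · rw [ceff_canonical hG1 j hj]
      simp only [Bool.false_eq_true, iff_false]
      rintro ⟨hc, -⟩
      rw [hp'len] at hc
      omega
  have hb1a : b1 = actualb k p1 C1.h := by
    funext j
    rw [Bool.eq_iff_iff]
    simp only [actualb, decide_eq_true_eq]
    exact (hReal1.2 j).symm
  have hEncp' : Encodes p' (upd E1 b1 tA1.op) := by
    have hx := encodes_upd hReal1.1 hopEn1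
    rwa [← hb1a] at hx
  have hRealp' : Realizes p' (upd E1 b1 tA1.op) (ceff b1 tA1.op) C1.h := ⟨hEncp', hpattern⟩
  have hRealp'2 : Realizes p' (upd E2 b2 tA2.op) (ceff b2 tA2.op) C1.h := by
    have e1 : upd E2 b2 tA2.op = upd E1 b1 tA1.op := hupd2.trans hupd1.symm
    rw [e1, ← hceq]
    exact hRealp'
  have hp'k : p'.length ≤ k := by rw [hp'len]; exact mAfter_le hG1
  obtain ⟨ps1, hps1m, happ1, hopen1, hreal1'⟩ := rev_transfer hG1 hp'k hRealp'
  obtain ⟨ps2, hps2m, happ2, hopen2, hreal2'⟩ := rev_transfer hG2 hp'k hRealp'2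
  have st1 : A.StepT u tA1 ⟨tA1.src, ps1, C1.h⟩ ⟨C'.q.1, p', C'.h⟩ := by
    refine ⟨htA1, rfl, hhead1, by rw [hps1m]; exact hG1.1, hletter1,
      realizes_testSat hG1 hreal1', hopen1, htgt1'.symm, happ1.symm, ?_⟩
    exact hh1'
  have st2 : A.StepT u tA2 ⟨tA2.src, ps2, C1.h⟩ ⟨C'.q.1, p', C'.h⟩ := by
    refine ⟨htA2, rfl, hhead2, by rw [hps2m]; exact hG2.1, hletter2,
      realizes_testSat hG2 hreal2', hopen2, htgt2'.symm, happ2.symm, ?_⟩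
    exact hh2'
  have hAA : tA1 = tA2 := hdet u tA1 tA2 ⟨C'.q.1, p', C'.h⟩ ⟨_, st1⟩ ⟨_, st2⟩
  subst hAA
  -- now derive equality of the patterns
  have g1 := good_match_m hG1
  have g2 := good_match_m hG2
  have hm12 : m1 = m2 := by
    cases hopc : tA1.op with
    | nop => rw [hopc] at hm'; exact hm'
    | drop n =>
        rw [hopc] at g1 g2
        exact g1.trans g2.symm
    | lift n =>
        rw [hopc] at g1 g2
        exact g1.trans g2.symm
  have hb12 : b1 = b2 := by
    funext j
    cases hopc : tA1.op with
    | nop =>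
        rw [hopc] at hceq
        exact congrFun hceq j
    | drop n =>
        rw [hopc] at hceq g1 g2
        by_cases hj : j = n
        · rw [hj, good_bfalse hG1 (by omega), good_bfalse hG2 (by omega)]
        · have := congrFun hceq j
          simpa only [ceff, if_neg hj] using this
    | lift n =>
        rw [hopc] at hceq
        by_cases hj : j = n
        · have t1 := hG1.2.2.2.2.2.2.2.2
          have t2 := hG2.2.2.2.2.2.2.2.2
          rw [hopc] at t1 t2
          rw [hj, t1.2, t2.2]
        · have := congrFun hceq j
          simpa only [ceff, if_neg hj] using this
  have hE12 : E1 = E2 := by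
    funext i j
    cases hopc : tA1.op with
    | nop =>
        rw [hopc] at hupd1 hupd2
        exact congrFun (congrFun (hupd1.trans hupd2.symm) i) j
    | drop n =>
        rw [hopc] at hupd1 hupd2 g1 g2
        by_cases hvi : (i : ℕ) < (n : ℕ)
        · by_cases hvj : (j : ℕ) < (n : ℕ)
          · have hi' : i ≠ n := fun hc => by rw [hc] at hvi; omega
            have hj' : j ≠ n := fun hc => by rw [hc] at hvj; omega
            have e1 : upd E1 b1 (.drop n) i j = E1 i j := by
              simp [upd, if_neg hi', if_neg hj']
            have e2 : upd E2 b2 (.drop n) i j = E2 i j := by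
              simp [upd, if_neg hi', if_neg hj']
            rw [← e1, ← e2, hupd1, hupd2]
          · have f1 : E1 i j = false := by
              rw [Bool.eq_false_iff]
              intro hc
              have := good_range hG1 i j hc
              omega
            have f2 : E2 i j = false := by
              rw [Bool.eq_false_iff]
              intro hc
              have := good_range hG2 i j hc
              omega
            rw [f1, f2]
        · have f1 : E1 i j = false := by
            rw [Bool.eq_false_iff]
            intro hc
            have := good_range hG1 i j hc
            omega
          have f2 : E2 i j = false := by
            rw [Bool.eq_false_iff]
            intro hc
            have := good_range hG2 i j hc
            omega
          rw [f1, f2]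
    | lift n =>
        rw [hopc] at hupd1 hupd2 g1 g2
        have t1 := hG1.2.2.2.2.2.2.2.2
        have t2 := hG2.2.2.2.2.2.2.2.2
        rw [hopc] at t1 t2
        have key : ∀ (E' : Fin k → Fin k → Bool) (b' : Fin k → Bool) (m'' : ℕ),
            Good tA1 E' b' m'' → b' n = true → ∀ jj : Fin k, E' n jj = b' jj := by
          intro E' b' m'' hG' hbn' jj
          rw [Bool.eq_iff_iff]
          constructor
          · intro hE
            rw [← hG'.2.2.2.2.1 n jj hE]
            exact hbn'
          · intro hb
            rw [good_symm hG' n jj]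
            exact hG'.2.2.2.2.2.1 jj n hb hbn'
        by_cases hi' : i = n
        · rw [hi', key E1 b1 m1 hG1 t1.2 j, key E2 b2 m2 hG2 t2.2 j, hb12]
        · by_cases hj' : j = n
          · rw [hj', good_symm hG1 i n, good_symm hG2 i n,
              key E1 b1 m1 hG1 t1.2 i, key E2 b2 m2 hG2 t2.2 i, hb12]
          · by_cases hvi : (i : ℕ) < (n : ℕ)
            · by_cases hvj : (j : ℕ) < (n : ℕ)
              · have hnot : ¬(i = n ∨ j = n) := by tauto
                have e1 : upd E1 b1 (.lift n) i j = E1 i j := by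
                  simp [upd, if_neg hnot]
                have e2 : upd E2 b2 (.lift n) i j = E2 i j := by
                  simp [upd, if_neg hnot]
                rw [← e1, ← e2, hupd1, hupd2]
              · have hvj' : (j : ℕ) ≠ (n : ℕ) := fun hc => hj' (Fin.ext hc)
                have f1 : E1 i j = false := by
                  rw [Bool.eq_false_iff]
                  intro hc
                  have := good_range hG1 i j hc
                  omega
                have f2 : E2 i j = false := by
                  rw [Bool.eq_false_iff]
                  intro hc
                  have := good_range hG2 i j hc
                  omega
                rw [f1, f2]
            · have hvi' : (i : ℕ) ≠ (n : ℕ) := fun hc => hi' (Fin.ext hc)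
              have f1 : E1 i j = false := by
                rw [Bool.eq_false_iff]
                intro hc
                have := good_range hG1 i j hc
                omega
              have f2 : E2 i j = false := by
                rw [Bool.eq_false_iff]
                intro hc
                have := good_range hG2 i j hc
                omega
              rw [f1, f2]
  rw [hE12, hb12, hm12]

end Construction

/-- Every `k`-pebble transducer with equality tests `A` having `n` states
can be turned into a basic `k`-pebble transducer `B` with at most `n·2^(k²)` states with the
same semantics, preserving determinism, reverse-determinism and reversibility. -/
theorem equality_tests_elimination
    {Q Sg Gm : Type} [Fintype Q] [Fintype Sg] {k : ℕ}
    (A : PT Q Sg Gm k) (hA : A.WF) :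
    ∃ (Q' : Type) (instQ' : Fintype Q') (B : PT Q' Sg Gm k),
      B.WF ∧ B.Basic ∧
      @Fintype.card Q' instQ' ≤ Fintype.card Q * 2 ^ (k ^ 2) ∧
      B.Sem = A.Sem ∧
      (A.Deterministic → B.Deterministic) ∧
      (A.RevDeterministic → B.RevDeterministic) ∧
      (A.Reversible → B.Reversible) := by
  rcases Nat.eq_zero_or_pos k with hk0 | hk
  · -- k = 0 : A is already basic
    subst hk0
    refine ⟨Q, inferInstance, A, hA, ?_, by simp, rfl, fun h => h, fun h => h, fun h => h⟩
    intro t ht l hl i j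
    exact i.elim0
  · have hfin := hA.2.2.2.2
    set L := hfin.toFinset.toList with hLdef
    have hL : ∀ t, t ∈ A.δ → t ∈ L := by
      intro t ht
      rw [hLdef, Finset.mem_toList, Set.Finite.mem_toFinset]
      exact ht
    refine ⟨Q × (Fin k → Fin k → Bool), inferInstance, Bof A hk L,
      wf_Bof hk L hA, basic_Bof hk L, ?_, sem_Bof hk L hL,
      fun h => det_Bof h, fun h => revdet_Bof h,
      fun h => ⟨det_Bof h.1, revdet_Bof h.2⟩⟩
    rw [Fintype.card_prod]
    have hcard : Fintype.card (Fin k → Fin k → Bool) = 2 ^ (k ^ 2) := by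
      rw [Fintype.card_fun, Fintype.card_fun, Fintype.card_bool, Fintype.card_fin,
        ← pow_mul, ← pow_two]
    rw [hcard]

end RevPeb
end

section
/- For every reversible n-pebble transducer T (possibly with equality tests) with state set Q, there exists a reversible n-pebble transducer T̄ with the same state set Q such that dom⟦T̄⟧ = dom⟦T⟧ and, for every u ∈ dom⟦T⟧, the word ⟦T̄⟧(u) is the reverse of the word ⟦T⟧(u). -/
/-!
`T.reverse` runs `T` backwards. A transition `(p, a, φ, op, q)` becomes `(q, a, φ', op⁻¹, p)`,
where `op⁻¹` exchanges drop and lift of the same pebble and `φ'` is `φ` transported to the pebble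
stack after `op`: the only atoms whose value `op` changes are those mentioning the moved pebble,
and each of them is either constant or, for a lift, equivalent to an atom about the head.
All directions are negated, so undoing the head move of a step of `T` is a step of `T.reverse`;
read backwards, runs of `T` and of `T.reverse` correspond after shifting the head, and
determinism and reverse-determinism exchange roles. Only transitions that fire somewhere are
reversed: on them reversal is injective by determinism, so the output of a reversed transition
can be defined as the reversed output of its unique preimage.
-/

namespace RevPeb

variable {Q Sg Gm : Type*} {k : ℕ}

lemma exists_eq_append_of_opEnabled_lift {peb : List ℕ} {h : ℕ} {i : Fin k}
    (hop : opEnabled peb h (.lift i)) : ∃ P : List ℕ, peb = P ++ [h] ∧ P.length = i := by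
  obtain ⟨hlen, htop⟩ := hop
  have hne : peb ≠ [] := List.ne_nil_of_length_pos (by omega)
  refine ⟨peb.dropLast, ?_, by simp [hlen]⟩
  rw [List.getD_eq_getElem _ _ (by omega)] at htop
  conv_lhs => rw [← List.dropLast_append_getLast hne]
  simp [List.getLast_eq_getElem, hlen, htop]

namespace PebOp

def inv : PebOp k → PebOp k
  | .nop => .nop
  | .drop i => .lift i
  | .lift i => .drop i

@[simp] lemma inv_inv (op : PebOp k) : op.inv.inv = op := by cases op <;> rfl

lemma inv_injective : Function.Injective (inv : PebOp k → PebOp k) :=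
  Function.LeftInverse.injective inv_inv

end PebOp

lemma opEnabled_inv {peb : List ℕ} {h : ℕ} {op : PebOp k} (hop : opEnabled peb h op) :
    opEnabled (opApply peb h op) h op.inv := by
  cases op with
  | nop => trivial
  | drop i =>
    have hlen : peb.length = i := hop
    exact ⟨by simp [opApply, hlen], by simp [opApply, ← hlen]⟩
  | lift i =>
    obtain ⟨P, rfl, hP⟩ := exists_eq_append_of_opEnabled_lift hop
    simpa [opApply, opEnabled, PebOp.inv] using hP

lemma opApply_inv {peb : List ℕ} {h : ℕ} {op : PebOp k} (hop : opEnabled peb h op) :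
    opApply (opApply peb h op) h op.inv = peb := by
  cases op with
  | nop => rfl
  | drop i => simp [opApply, PebOp.inv]
  | lift i =>
    obtain ⟨P, rfl, -⟩ := exists_eq_append_of_opEnabled_lift hop
    simp [opApply, PebOp.inv]

lemma length_opApply_le {peb : List ℕ} {h : ℕ} {op : PebOp k}
    (hop : opEnabled peb h op) (hp : peb.length ≤ k) : (opApply peb h op).length ≤ k := by
  cases op with
  | nop => exact hp
  | drop i => simp [opApply, show peb.length = i from hop, Nat.succ_le_of_lt i.isLt]
  | lift i => simp only [opApply, List.length_dropLast]; omega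

lemma nextHead_nextHead_neg {len h : ℕ} (hh : h ≤ len) (d : SignType) :
    nextHead len (nextHead len h d) (-d) = h := by
  cases d with
  | zero => rfl
  | pos =>
    show ((h + 1) % (len + 1) + len) % (len + 1) = h
    rw [Nat.mod_add_mod, show h + 1 + len = h + (len + 1) by omega, Nat.add_mod_right]
    exact Nat.mod_eq_of_lt (by omega)
  | neg =>
    show ((h + len) % (len + 1) + 1) % (len + 1) = h
    rw [Nat.mod_add_mod, show h + len + 1 = h + (len + 1) by omega, Nat.add_mod_right]
    exact Nat.mod_eq_of_lt (by omega)

def Atom.mentions (i : Fin k) : Atom k → Bool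
  | .headPeb j => j == i
  | .pebPeb j l => j == i || l == i

def Atom.substHead (i : Fin k) : Atom k → Atom k
  | .headPeb j => .headPeb j
  | .pebPeb j l => if j = i then .headPeb l else if l = i then .headPeb j else .pebPeb j l

lemma Atom.substHead_eq_headPeb_of_mentions {i : Fin k} {A : Atom k}
    (hA : (A.substHead i).mentions i) : A.substHead i = .headPeb i := by
  cases A <;> grind [Atom.substHead, Atom.mentions]

def litSat (peb : List ℕ) (h : ℕ) (l : Atom k × Bool) : Prop :=
  atomSat peb h l.1 ↔ l.2 = true

lemma not_atomSat_of_mentions {peb : List ℕ} {h : ℕ} {i : Fin k} (hlen : peb.length = i)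
    {A : Atom k} (hA : A.mentions i) : ¬ atomSat peb h A := by
  cases A <;> simp_all [Atom.mentions, atomSat]; omega

lemma atomSat_append_iff_of_not_mentions {peb : List ℕ} {x h : ℕ} {i : Fin k}
    (hlen : peb.length = i) {A : Atom k} (hA : A.mentions i = false) :
    atomSat (peb ++ [x]) h A ↔ atomSat peb h A := by
  cases A with
  | headPeb j => simp_all [Atom.mentions, atomSat]; grind [List.getD_append]
  | pebPeb j l => simp_all [Atom.mentions, atomSat]; grind [List.getD_append]

lemma atomSat_append_headPeb_self {P : List ℕ} {h : ℕ} {i : Fin k} (hlen : P.length = i) :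
    atomSat (P ++ [h]) h (.headPeb i) := by
  simp [atomSat, ← hlen]

lemma atomSat_substHead_iff {peb : List ℕ} {h : ℕ} {i : Fin k} (hi : (i : ℕ) < peb.length)
    (htop : peb.getD i 0 = h) (A : Atom k) :
    atomSat peb h (A.substHead i) ↔ atomSat peb h A := by
  cases A <;> simp_all [Atom.substHead, atomSat]; grind

/-- On a stack without pebble `i`, or with pebble `i` on the head, every atom mentioning `i` is
constant; `headPeb i` with the appropriate polarity then encodes that constant. -/
def flipIfMentions (i : Fin k) (l : Atom k × Bool) : Atom k × Bool :=
  if l.1.mentions i then (.headPeb i, !l.2) else l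

def PebOp.transportLit : PebOp k → Atom k × Bool → Atom k × Bool
  | .nop, l => l
  | .drop i, l => flipIfMentions i l
  | .lift i, (A, b) => flipIfMentions i (A.substHead i, b)

def PebOp.transportTest (op : PebOp k) (φ : Test k) : Test k := φ.map op.transportLit

lemma litSat_append_flipIfMentions {P : List ℕ} {h : ℕ} {i : Fin k} (hlen : P.length = i)
    (l : Atom k × Bool) : litSat (P ++ [h]) h (flipIfMentions i l) ↔ litSat P h l := by
  obtain ⟨A, b⟩ := l
  by_cases hA : A.mentions i
  · simp [flipIfMentions, litSat, hA, atomSat_append_headPeb_self (h := h) hlen,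
      not_atomSat_of_mentions hlen hA]
  · simp only [Bool.not_eq_true] at hA
    simp [flipIfMentions, litSat, hA, atomSat_append_iff_of_not_mentions hlen hA]

lemma litSat_flipIfMentions_substHead {P : List ℕ} {h : ℕ} {i : Fin k} (hlen : P.length = i)
    (A : Atom k) (b : Bool) :
    litSat P h (flipIfMentions i (A.substHead i, b)) ↔ litSat (P ++ [h]) h (A, b) := by
  have hsubst : atomSat (P ++ [h]) h (A.substHead i) ↔ atomSat (P ++ [h]) h A :=
    atomSat_substHead_iff (by simp [hlen]) (by simp [← hlen]) A
  by_cases hA : (A.substHead i).mentions i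
  · have heq := Atom.substHead_eq_headPeb_of_mentions hA
    have hP : ¬ atomSat P h (.headPeb i) :=
      not_atomSat_of_mentions hlen (by simp [Atom.mentions])
    rw [heq] at hsubst ⊢
    simp [flipIfMentions, litSat, Atom.mentions, hP, hsubst.mp (atomSat_append_headPeb_self hlen)]
  · simp only [Bool.not_eq_true] at hA
    simp [flipIfMentions, litSat, hA, ← hsubst, atomSat_append_iff_of_not_mentions hlen hA]

lemma litSat_transportLit {peb : List ℕ} {h : ℕ} {op : PebOp k} (hop : opEnabled peb h op)
    (l : Atom k × Bool) : litSat (opApply peb h op) h (op.transportLit l) ↔ litSat peb h l := by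
  cases op with
  | nop => rfl
  | drop i => exact litSat_append_flipIfMentions hop l
  | lift i =>
    obtain ⟨P, rfl, hP⟩ := exists_eq_append_of_opEnabled_lift hop
    obtain ⟨A, b⟩ := l
    simpa [opApply, PebOp.transportLit] using litSat_flipIfMentions_substHead hP A b

lemma testSat_transportTest {peb : List ℕ} {h : ℕ} {op : PebOp k} (hop : opEnabled peb h op)
    (φ : Test k) : testSat (opApply peb h op) h (op.transportTest φ) ↔ testSat peb h φ := by
  simp only [testSat, PebOp.transportTest, List.forall_mem_map]
  exact forall₂_congr fun l _ => litSat_transportLit hop l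

def PTrans.reverse (t : PTrans Q Sg k) : PTrans Q Sg k :=
  ⟨t.tgt, t.letter, t.op.transportTest t.test, t.op.inv, t.src⟩

def PT.firable (T : PT Q Sg Gm k) : Set (PTrans Q Sg k) :=
  {t | ∃ (u : List Sg) (C C' : Config Q), T.StepT u t C C'}

lemma PT.firable_subset (T : PT Q Sg Gm k) : T.firable ⊆ T.δ :=
  fun _ ⟨_, _, _, hst⟩ => hst.1

lemma PT.injOn_reverse_firable {T : PT Q Sg Gm k} (hDet : T.Deterministic) :
    Set.InjOn PTrans.reverse T.firable := by
  rintro ⟨p₁, a₁, φ₁, op₁, q₁⟩ ⟨u, C, C', hst⟩ ⟨p₂, a₂, φ₂, op₂, q₂⟩ ⟨_, _, _, hst₂⟩ he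
  simp only [PTrans.reverse, PTrans.mk.injEq] at he
  obtain ⟨rfl, rfl, hφ, hop, rfl⟩ := he
  obtain rfl := PebOp.inv_injective hop
  obtain ⟨hδ₁, hq, hh, hp, hl, hts, hoe, hC'⟩ := hst
  have hts₂ : testSat C.peb C.h φ₂ := by
    rwa [← testSat_transportTest hoe, ← hφ, testSat_transportTest hoe]
  exact hDet u _ _ C ⟨C', hδ₁, hq, hh, hp, hl, hts, hoe, hC'⟩
    ⟨C', hst₂.1, hq, hh, hp, hl, hts₂, hoe, hC'⟩

noncomputable def PT.reverse (T : PT Q Sg Gm k) : PT Q Sg Gm k :=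
  have : Nonempty (PTrans Q Sg k) := ⟨⟨T.qinit, none, [], .nop, T.qinit⟩⟩
  { dir := -T.dir
    qinit := T.qfin
    qfin := T.qinit
    δ := PTrans.reverse '' T.firable
    μ := fun s => (T.μ (Function.invFunOn PTrans.reverse T.firable s)).reverse }

lemma PT.reverse_μ {T : PT Q Sg Gm k} (hDet : T.Deterministic) {t : PTrans Q Sg k}
    (ht : t ∈ T.firable) : T.reverse.μ t.reverse = (T.μ t).reverse := by
  have : Nonempty (PTrans Q Sg k) := ⟨t⟩
  simp [PT.reverse, (PT.injOn_reverse_firable hDet).leftInvOn_invFunOn ht]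

/-- With `d = -T.dir` this undoes the head move of the step of `T` entering `C`, and with
`d = T.dir` it redoes it. -/
def Config.shift (len : ℕ) (d : Q → SignType) (C : Config Q) : Config Q :=
  ⟨C.q, C.peb, nextHead len C.h (d C.q)⟩

lemma Config.shift_eq_self {len : ℕ} {d : Q → SignType} {C : Config Q} (hd : d C.q = 0) :
    C.shift len d = C := by
  simp [Config.shift, hd, nextHead]

lemma PT.StepT.reverse {T : PT Q Sg Gm k} {u : List Sg} {t : PTrans Q Sg k} {C C' : Config Q}
    (hst : T.StepT u t C C') :
    T.reverse.StepT u t.reverse (C'.shift u.length (-T.dir)) (C.shift u.length (-T.dir)) := by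
  have hfire : t ∈ T.firable := ⟨u, C, C', hst⟩
  obtain ⟨-, hq, hh, hp, hl, hts, hoe, hq', hp', hh'⟩ := hst
  have hC' : C'.shift u.length (-T.dir) = ⟨t.tgt, opApply C.peb C.h t.op, C.h⟩ := by
    simp [Config.shift, hq', hp', hh', nextHead_nextHead_neg hh]
  rw [hC']
  exact ⟨⟨t, hfire, rfl⟩, rfl, hh, length_opApply_le hoe hp, hl,
    (testSat_transportTest hoe _).mpr hts, opEnabled_inv hoe, hq, (opApply_inv hoe).symm,
    by simp [Config.shift, hq]; rfl⟩

lemma PT.StepT.of_reverse {T : PT Q Sg Gm k} {u : List Sg} {s : PTrans Q Sg k}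
    {D D' : Config Q} (hst : T.reverse.StepT u s D D') :
    ∃ t ∈ T.firable, t.reverse = s ∧
      T.StepT u t (D'.shift u.length T.dir) (D.shift u.length T.dir) := by
  obtain ⟨⟨t, hfire, rfl⟩, hq, hh, hp, hl, hts, hoe, hq', hp', hh'⟩ := hst
  have hoe' : opEnabled (opApply D.peb D.h t.op.inv) D.h t.op := by
    simpa [PTrans.reverse] using opEnabled_inv hoe
  have hundo : opApply (opApply D.peb D.h t.op.inv) D.h t.op = D.peb := by
    simpa [PTrans.reverse] using opApply_inv hoe
  have hD' : D'.shift u.length T.dir = ⟨t.src, opApply D.peb D.h t.op.inv, D.h⟩ := by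
    have := nextHead_nextHead_neg hh (-T.dir t.src)
    simp only [neg_neg] at this
    simp [Config.shift, hq', hp', hh', PT.reverse, PTrans.reverse, this]
  rw [hD']
  refine ⟨t, hfire, rfl, T.firable_subset hfire, rfl, hh, length_opApply_le hoe hp, hl, ?_, hoe',
    hq, hundo.symm, by simp [Config.shift, hq]; rfl⟩
  rw [← testSat_transportTest hoe', hundo]
  exact hts

lemma PT.Run.snoc {T : PT Q Sg Gm k} {u : List Sg} {C C' C'' : Config Q} {v : List Gm}
    {t : PTrans Q Sg k} (hr : T.Run u C C' v) (hst : T.StepT u t C' C'') :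
    T.Run u C C'' (v ++ T.μ t) := by
  induction hr with
  | refl => simpa using PT.Run.step t hst (PT.Run.refl C'')
  | step t' hst' _ ih => simpa using PT.Run.step t' hst' (ih hst)

lemma PT.Run.reverse_of_step {X Y : PT Q Sg Gm k} {u : List Sg} (f : Config Q → Config Q)
    (hstep : ∀ t C C', X.StepT u t C C' →
      ∃ s, Y.StepT u s (f C') (f C) ∧ Y.μ s = (X.μ t).reverse)
    {C C' : Config Q} {v : List Gm} (hr : X.Run u C C' v) : Y.Run u (f C') (f C) v.reverse := by
  induction hr with
  | refl => exact .refl _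
  | step t hst _ ih =>
    obtain ⟨s, hs, hμ⟩ := hstep _ _ _ hst
    simpa [hμ] using ih.snoc hs

lemma PT.Run.reverse {T : PT Q Sg Gm k} (hDet : T.Deterministic) {u : List Sg}
    {C C' : Config Q} {v : List Gm} (hr : T.Run u C C' v) :
    T.reverse.Run u (C'.shift u.length (-T.dir)) (C.shift u.length (-T.dir)) v.reverse :=
  hr.reverse_of_step _ fun t _ _ hst =>
    ⟨t.reverse, hst.reverse, T.reverse_μ hDet ⟨u, _, _, hst⟩⟩

lemma PT.Run.of_reverse {T : PT Q Sg Gm k} (hDet : T.Deterministic) {u : List Sg}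
    {D D' : Config Q} {w : List Gm} (hr : T.reverse.Run u D D' w) :
    T.Run u (D'.shift u.length T.dir) (D.shift u.length T.dir) w.reverse :=
  hr.reverse_of_step _ fun _ _ _ hst => by
    obtain ⟨t, hfire, rfl, hst'⟩ := hst.of_reverse
    exact ⟨t, hst', by rw [T.reverse_μ hDet hfire, List.reverse_reverse]⟩

lemma PT.WF.reverse {T : PT Q Sg Gm k} (hWF : T.WF) : T.reverse.WF := by
  obtain ⟨hdi, hdf, hne, htr, hfin⟩ := hWF
  refine ⟨by simp [PT.reverse, hdf], by simp [PT.reverse, hdi], hne.symm, ?_,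
    (hfin.subset T.firable_subset).image _⟩
  rintro _ ⟨t, hfire, rfl⟩
  exact (htr t (T.firable_subset hfire)).symm

lemma PT.Reversible.reverse {T : PT Q Sg Gm k} (hRev : T.Reversible) : T.reverse.Reversible := by
  constructor
  · rintro u s₁ s₂ D ⟨D₁, hst₁⟩ ⟨D₂, hst₂⟩
    obtain ⟨t₁, -, rfl, hT₁⟩ := hst₁.of_reverse
    obtain ⟨t₂, -, rfl, hT₂⟩ := hst₂.of_reverse
    rw [hRev.2 u t₁ t₂ _ ⟨_, hT₁⟩ ⟨_, hT₂⟩]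
  · rintro u s₁ s₂ D' ⟨D₁, hst₁⟩ ⟨D₂, hst₂⟩
    obtain ⟨t₁, -, rfl, hT₁⟩ := hst₁.of_reverse
    obtain ⟨t₂, -, rfl, hT₂⟩ := hst₂.of_reverse
    rw [hRev.1 u t₁ t₂ _ ⟨_, hT₁⟩ ⟨_, hT₂⟩]

lemma PT.mem_sem_iff_reverse {T : PT Q Sg Gm k} (hWF : T.WF) (hDet : T.Deterministic)
    (u : List Sg) (v : List Gm) : (u, v) ∈ T.Sem ↔ (u, v.reverse) ∈ T.reverse.Sem := by
  have hfix : ∀ {q : Q} {d : Q → SignType}, d q = 0 →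
      (⟨q, [], 0⟩ : Config Q).shift u.length d = ⟨q, [], 0⟩ :=
    fun hd => Config.shift_eq_self hd
  constructor
  · intro (hr : T.Run u ⟨T.qinit, [], 0⟩ ⟨T.qfin, [], 0⟩ v)
    have := hr.reverse hDet
    rwa [hfix (by simp [hWF.2.1]), hfix (by simp [hWF.1])] at this
  · intro (hr : T.reverse.Run u ⟨T.qfin, [], 0⟩ ⟨T.qinit, [], 0⟩ v.reverse)
    have := hr.of_reverse hDet
    rwa [hfix hWF.1, hfix hWF.2.1, List.reverse_reverse] at this

theorem reverse_output_general
    {Q Sg Gm : Type} {n : ℕ}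
    (T : PT Q Sg Gm n) (hWF : T.WF) (hRev : T.Reversible) :
    ∃ Tbar : PT Q Sg Gm n, Tbar.WF ∧ Tbar.Reversible ∧
      ∀ (u : List Sg) (v : List Gm), (u, v) ∈ T.Sem ↔ (u, v.reverse) ∈ Tbar.Sem :=
  ⟨T.reverse, hWF.reverse, hRev.reverse, T.mem_sem_iff_reverse hWF hRev.1⟩

/-- For every reversible `n`-pebble transducer `T` (possibly with equality
tests) with state set `Q`, there is a reversible `n`-pebble transducer `T̄` with the same
state set `Q`, with the same domain, computing the reverse of the output of `T`. -/
theorem reverse_output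
    {Q Sg Gm : Type} [Fintype Q] [Fintype Sg] {n : ℕ}
    (T : PT Q Sg Gm n) (hWF : T.WF) (hRev : T.Reversible) :
    ∃ Tbar : PT Q Sg Gm n, Tbar.WF ∧ Tbar.Reversible ∧
      ∀ (u : List Sg) (v : List Gm), (u, v) ∈ T.Sem ↔ (u, v.reverse) ∈ Tbar.Sem :=
  reverse_output_general T hWF hRev

end RevPeb
end

section
/- For every reversible n-pebble transducer T with state set Q, there exists a reversible n-pebble transducer T' with at most 3·|Q| states computing the same partial function as T and such that every transition of T' whose target state lies in Q'_{+1} ∪ Q'_{-1} (i.e., every transition that moves the head) has operation nop. -/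
/-!
Common framework: pebble transducers with equality tests
(following "Reversible Pebble Transducers").
-/

namespace RevPeb

variable {Q Sg Gm : Type*} {k : ℕ}

section Construction

variable {Q Sg Gm : Type} {n : ℕ}

/-- Lift a transition of `T`: if the target state moves the head, redirect it to
the pre-copy (`Sum.inr`) of the target. -/
def lift1 (T : PT Q Sg Gm n) (t : PTrans Q Sg n) : PTrans (Q ⊕ Q) Sg n :=
  ⟨Sum.inl t.src, t.letter, t.test, t.op,
    if T.dir t.tgt = 0 then Sum.inl t.tgt else Sum.inr t.tgt⟩

/-- The transformed transducer: pre-copies `Sum.inr q` have polarity `0`; from a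
pre-copy one takes a universal `nop` transition to the real state, which performs
the head move. -/
def noMove (T : PT Q Sg Gm n) : PT (Q ⊕ Q) Sg Gm n where
  dir := Sum.elim T.dir fun _ => 0
  qinit := .inl T.qinit
  qfin := .inl T.qfin
  δ := (lift1 T '' T.δ) ∪
       {t | ∃ (q : Q) (a : Option Sg), T.dir q ≠ 0 ∧
              t = ⟨.inr q, a, [], .nop, .inl q⟩}
  μ := fun t => match t.src with
    | .inl q => T.μ ⟨q, t.letter, t.test, t.op, Sum.elim id id t.tgt⟩
    | .inr _ => []

lemma mu_lift1 (T : PT Q Sg Gm n) (t : PTrans Q Sg n) :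
    (noMove T).μ (lift1 T t) = T.μ t := by
  simp only [noMove, lift1]
  split <;> rfl

lemma mu_aux (T : PT Q Sg Gm n) (q : Q) (a : Option Sg) :
    (noMove T).μ ⟨.inr q, a, [], .nop, .inl q⟩ = [] := rfl

/-- Embed a configuration. -/
def clc (C : Config Q) : Config (Q ⊕ Q) := ⟨.inl C.q, C.peb, C.h⟩

lemma opApply_length_le {peb : List ℕ} {h : ℕ} {op : PebOp n}
    (hen : opEnabled peb h op) (hle : peb.length ≤ n) :
    (opApply peb h op).length ≤ n := by
  cases op with
  | nop => simpa [opApply] using hle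
  | drop i =>
      simp only [opEnabled] at hen
      simp only [opApply, List.length_append, List.length_cons, List.length_nil, hen]
      have := i.isLt; omega
  | lift i =>
      simp only [opApply, List.length_dropLast]; omega

lemma nextHead_injOn {len h1 h2 : ℕ} (d : SignType)
    (h1le : h1 ≤ len) (h2le : h2 ≤ len)
    (heq : nextHead len h1 d = nextHead len h2 d) : h1 = h2 := by
  have key : ∀ h ≤ len, ∀ d : SignType, nextHead len h d =
      (match d with
        | .pos => if h = len then 0 else h + 1
        | .zero => h
        | .neg => if h = 0 then len else h - 1) := by
    intro h hle d
    cases d with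
    | zero => rfl
    | pos =>
        simp only [nextHead]
        by_cases hh : h = len
        · simp [hh]
        · rw [Nat.mod_eq_of_lt (by omega)]; simp [hh]
    | neg =>
        simp only [nextHead]
        by_cases hh : h = 0
        · subst hh
          rw [Nat.zero_add, Nat.mod_eq_of_lt (Nat.lt_succ_self len)]
          simp
        · have : h + len = (h - 1) + (len + 1) := by omega
          rw [this, Nat.add_mod_right, Nat.mod_eq_of_lt (by omega)]
          simp [hh]
  rw [key h1 h1le d, key h2 h2le d] at heq
  cases d <;> dsimp only at heq <;>
    first
      | omega
      | (split_ifs at heq <;> omega)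


lemma nextHead_zero (len h : ℕ) : nextHead len h (0 : SignType) = h := rfl

lemma dir_inl (T : PT Q Sg Gm n) (q : Q) : (noMove T).dir (.inl q) = T.dir q := rfl
lemma dir_inr (T : PT Q Sg Gm n) (q : Q) : (noMove T).dir (.inr q) = 0 := rfl

lemma forward_run (T : PT Q Sg Gm n) {u : List Sg} {C C'' : Config Q} {v : List Gm}
    (h : T.Run u C C'' v) : (noMove T).Run u (clc C) (clc C'') v := by
  induction h with
  | refl C => exact .refl _
  | @step C C' C'' t v hs hr ih =>
    obtain ⟨htδ, hq, hh, hpl, hlet, htest, hope, hq', hpeb', hh'⟩ := hs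
    by_cases hd : T.dir t.tgt = 0
    · have hstep : (noMove T).StepT u (lift1 T t) (clc C) (clc C') := by
        refine ⟨Or.inl ⟨t, htδ, rfl⟩, ?_, hh, hpl, hlet, htest, hope, ?_, hpeb', ?_⟩
        · simp [clc, lift1, hq]
        · simp [clc, lift1, hd, hq']
        · show C'.h = nextHead u.length C.h ((noMove T).dir (lift1 T t).tgt)
          rw [hh']
          simp [lift1, hd, dir_inl, nextHead_zero]
      rw [← mu_lift1 T t]
      exact .step _ hstep ih
    · have hpl' : C'.peb.length ≤ n := by
        rw [hpeb']; exact opApply_length_le hope hpl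
      have hstep1 : (noMove T).StepT u (lift1 T t) (clc C)
          ⟨.inr t.tgt, C'.peb, C.h⟩ := by
        refine ⟨Or.inl ⟨t, htδ, rfl⟩, ?_, hh, hpl, hlet, htest, hope, ?_, hpeb', ?_⟩
        · simp [clc, lift1, hq]
        · simp [lift1, hd]
        · show C.h = nextHead u.length C.h ((noMove T).dir (lift1 T t).tgt)
          simp [lift1, hd, dir_inr, nextHead_zero]
      have hstep2 : (noMove T).StepT u
          ⟨.inr t.tgt, letterAt u C.h, [], .nop, .inl t.tgt⟩
          ⟨.inr t.tgt, C'.peb, C.h⟩ (clc C') := by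
        refine ⟨Or.inr ⟨t.tgt, letterAt u C.h, hd, rfl⟩, rfl, hh, hpl', rfl,
          ?_, trivial, ?_, rfl, ?_⟩
        · intro l hl; simp at hl
        · simp [clc, hq']
        · exact hh'
      have hv : T.μ t ++ v = (noMove T).μ (lift1 T t) ++
          ((noMove T).μ ⟨.inr t.tgt, letterAt u C.h, [], .nop, .inl t.tgt⟩ ++ v) := by
        rw [mu_lift1, mu_aux]; simp
      rw [hv]
      exact .step _ hstep1 (.step _ hstep2 ih)

lemma backward_run (T : PT Q Sg Gm n) {u : List Sg} {D E : Config (Q ⊕ Q)} {v : List Gm}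
    (h : (noMove T).Run u D E v) :
    ∀ Cf : Config Q, E = clc Cf →
      (∀ C : Config Q, D = clc C → T.Run u C Cf v) ∧
      (∀ (q : Q) (peb : List ℕ) (hd : ℕ), D = ⟨.inr q, peb, hd⟩ →
        T.Run u ⟨q, peb, nextHead u.length hd (T.dir q)⟩ Cf v) := by
  induction h with
  | refl C =>
      intro Cf hE; subst hE
      constructor
      · intro C0 hD
        have hC : C0 = Cf := by
          cases C0; cases Cf
          simp only [clc, Config.mk.injEq, Sum.inl.injEq] at hD
          simp [Config.mk.injEq, hD.1, hD.2.1, hD.2.2]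
        subst hC; exact .refl _
      · intro q peb hd hD
        exfalso
        cases Cf
        simp [clc, Config.mk.injEq] at hD
  | @step D D' E t v0 hs hr ih =>
      intro Cf hE
      obtain ⟨htδ, hq, hh, hpl, hlet, htest, hope, hq', hpeb', hh'⟩ := hs
      have IH := ih Cf hE
      constructor
      · intro C hD; subst hD
        rcases htδ with ⟨t0, ht0, rfl⟩ | ⟨q0, a0, hq0, rfl⟩
        · have hqsrc : C.q = t0.src := by
            simpa [clc, lift1] using hq
          by_cases hd : T.dir t0.tgt = 0
          · have h1 : D'.q = Sum.inl t0.tgt := by rw [hq']; simp [lift1, hd]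
            have h2 : D'.h = C.h := by
              rw [hh']; simp [clc, lift1, hd, dir_inl, nextHead_zero]
            have hD' : D' = clc ⟨t0.tgt, opApply C.peb C.h t0.op, C.h⟩ := by
              obtain ⟨dq, dpeb, dh⟩ := D'
              exact Config.mk.injEq .. ▸ ⟨h1, hpeb', h2⟩
            have tail := IH.1 _ hD'
            have hstep : T.StepT u t0 C ⟨t0.tgt, opApply C.peb C.h t0.op, C.h⟩ := by
              refine ⟨ht0, hqsrc, hh, hpl, hlet, htest, hope, rfl, rfl, ?_⟩
              rw [hd]; rfl
            rw [mu_lift1]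
            exact .step t0 hstep tail
          · have h1 : D'.q = Sum.inr t0.tgt := by rw [hq']; simp [lift1, hd]
            have h2 : D'.h = C.h := by
              rw [hh']; simp [clc, lift1, hd, dir_inr, nextHead_zero]
            have hD' : D' = ⟨.inr t0.tgt, opApply C.peb C.h t0.op, C.h⟩ := by
              obtain ⟨dq, dpeb, dh⟩ := D'
              exact Config.mk.injEq .. ▸ ⟨h1, hpeb', h2⟩
            have tail := IH.2 t0.tgt (opApply C.peb C.h t0.op) C.h hD'
            have hstep : T.StepT u t0 C
                ⟨t0.tgt, opApply C.peb C.h t0.op,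
                  nextHead u.length C.h (T.dir t0.tgt)⟩ :=
              ⟨ht0, hqsrc, hh, hpl, hlet, htest, hope, rfl, rfl, rfl⟩
            rw [mu_lift1]
            exact .step t0 hstep tail
        · exact absurd hq (by simp [clc])
      · intro q peb hd0 hD; subst hD
        rcases htδ with ⟨t0, ht0, rfl⟩ | ⟨q0, a0, hq0, rfl⟩
        · exact absurd hq (by simp [lift1])
        · have hq0q : q0 = q := by
            have := hq
            simp only at this
            exact (Sum.inr.injEq .. ▸ this.symm)
          subst hq0q
          have hD' : D' = clc ⟨q0, peb, nextHead u.length hd0 (T.dir q0)⟩ := by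
            obtain ⟨dq, dpeb, dh⟩ := D'
            exact Config.mk.injEq .. ▸ ⟨hq', hpeb', hh'⟩
          have tail := IH.1 _ hD'
          simpa [mu_aux] using tail

lemma det_noMove (T : PT Q Sg Gm n) (hdet : T.Deterministic) :
    (noMove T).Deterministic := by
  intro u t1 t2 C h1 h2
  obtain ⟨C1, hs1⟩ := h1
  obtain ⟨C2, hs2⟩ := h2
  obtain ⟨m1, hq1, hh1, hpl1, hlet1, htest1, hope1, _⟩ := hs1
  obtain ⟨m2, hq2, hh2, hpl2, hlet2, htest2, hope2, _⟩ := hs2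
  rcases m1 with ⟨a, ha, rfl⟩ | ⟨qa, la, hqa, rfl⟩ <;>
    rcases m2 with ⟨b, hb, rfl⟩ | ⟨qb, lb, hqb, rfl⟩
  · have hsrc' : b.src = a.src := by
      have := hq1.symm.trans hq2
      simpa [lift1] using this.symm
    have hab : a = b := by
      apply hdet u a b ⟨a.src, C.peb, C.h⟩
      · exact ⟨⟨a.tgt, opApply C.peb C.h a.op, nextHead u.length C.h (T.dir a.tgt)⟩,
          ha, rfl, hh1, hpl1, hlet1, htest1, hope1, rfl, rfl, rfl⟩
      · exact ⟨⟨b.tgt, opApply C.peb C.h b.op, nextHead u.length C.h (T.dir b.tgt)⟩,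
          hb, hsrc'.symm, hh2, hpl2, hlet2, htest2, hope2, rfl, rfl, rfl⟩
    rw [hab]
  · rw [hq1] at hq2; exact absurd hq2 (by simp [lift1])
  · rw [hq1] at hq2; exact absurd hq2 (by simp [lift1])
  · have hqq : qa = qb := by
      rw [hq1] at hq2; simpa using hq2
    have hll : la = lb := by
      have := hlet1.symm.trans hlet2
      simpa using this
    rw [hqq, hll]

lemma revdet_noMove (T : PT Q Sg Gm n) (hrd : T.RevDeterministic) :
    (noMove T).RevDeterministic := by
  intro u t1 t2 C' h1 h2
  obtain ⟨C1, hs1⟩ := h1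
  obtain ⟨C2, hs2⟩ := h2
  obtain ⟨m1, hq1, hh1, hpl1, hlet1, htest1, hope1, hq1', hpeb1', hh1'⟩ := hs1
  obtain ⟨m2, hq2, hh2, hpl2, hlet2, htest2, hope2, hq2', hpeb2', hh2'⟩ := hs2
  rcases m1 with ⟨a, ha, rfl⟩ | ⟨qa, la, hqa, rfl⟩ <;>
    rcases m2 with ⟨b, hb, rfl⟩ | ⟨qb, lb, hqb, rfl⟩
  · -- both lifted transitions
    by_cases hda : T.dir a.tgt = 0 <;> by_cases hdb : T.dir b.tgt = 0
    · -- both targets nonmoving: C'.q = inl a.tgt = inl b.tgt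
      have htgt : a.tgt = b.tgt := by
        have := hq1'.symm.trans hq2'
        simpa [lift1, hda, hdb] using this
      have hCa : C'.h = C1.h := by
        rw [hh1']; simp [lift1, hda, dir_inl, nextHead_zero]
      have hCb : C'.h = C2.h := by
        rw [hh2']; simp [lift1, hdb, dir_inl, nextHead_zero]
      have hab : a = b := by
        apply hrd u a b ⟨a.tgt, C'.peb, C'.h⟩
        · refine ⟨⟨a.src, C1.peb, C1.h⟩, ha, rfl, hh1, hpl1, hlet1, htest1, hope1,
            rfl, hpeb1', ?_⟩
          rw [hCa, hda]; rfl
        · refine ⟨⟨b.src, C2.peb, C2.h⟩, hb, rfl, hh2, hpl2, hlet2, htest2, hope2,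
            htgt.symm ▸ rfl, hpeb2', ?_⟩
          rw [hCb, hdb]; rfl
      rw [hab]
    · exfalso
      have := hq1'.symm.trans hq2'
      simp [lift1, hda, hdb] at this
    · exfalso
      have := hq1'.symm.trans hq2'
      simp [lift1, hda, hdb] at this
    · -- both targets moving: C'.q = inr a.tgt = inr b.tgt
      have htgt : a.tgt = b.tgt := by
        have := hq1'.symm.trans hq2'
        simpa [lift1, hda, hdb] using this
      have hCa : C'.h = C1.h := by
        rw [hh1']; simp [lift1, hda, dir_inr, nextHead_zero]
      have hCb : C'.h = C2.h := by
        rw [hh2']; simp [lift1, hdb, dir_inr, nextHead_zero]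
      have hab : a = b := by
        apply hrd u a b ⟨a.tgt, C'.peb, nextHead u.length C'.h (T.dir a.tgt)⟩
        · refine ⟨⟨a.src, C1.peb, C1.h⟩, ha, rfl, hh1, hpl1, hlet1, htest1, hope1,
            rfl, hpeb1', by rw [hCa]⟩
        · refine ⟨⟨b.src, C2.peb, C2.h⟩, hb, rfl, hh2, hpl2, hlet2, htest2, hope2,
            htgt.symm ▸ rfl, hpeb2', by rw [hCb, htgt]⟩
      rw [hab]
  · -- lifted vs auxiliary: contradiction
    exfalso
    have := hq1'.symm.trans hq2'
    by_cases hda : T.dir a.tgt = 0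
    · have : a.tgt = qb := by simpa [lift1, hda] using this
      exact hqb (this ▸ hda)
    · simp [lift1, hda] at this
  · exfalso
    have := hq2'.symm.trans hq1'
    by_cases hdb : T.dir b.tgt = 0
    · have : b.tgt = qa := by simpa [lift1, hdb] using this
      exact hqa (this ▸ hdb)
    · simp [lift1, hdb] at this
  · -- both auxiliary
    have hqq : qa = qb := by
      have := hq1'.symm.trans hq2'
      simpa using this
    subst hqq
    have hha : C'.h = nextHead u.length C1.h (T.dir qa) := by
      rw [hh1']; rfl
    have hhb : C'.h = nextHead u.length C2.h (T.dir qa) := by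
      rw [hh2']; rfl
    have hhh : C1.h = C2.h :=
      nextHead_injOn (T.dir qa) hh1 hh2 (hha.symm.trans hhb)
    have hll : la = lb := by
      rw [hhh] at hlet1
      have := hlet1.symm.trans hlet2
      simpa using this
    rw [hll]

lemma wf_noMove [Fintype Q] [Fintype Sg] (T : PT Q Sg Gm n) (hWF : T.WF) :
    (noMove T).WF := by
  obtain ⟨hi, hf, hne, hsafe, hfin⟩ := hWF
  refine ⟨hi, hf, by simpa [noMove] using hne, ?_, ?_⟩
  · rintro t (⟨t0, ht0, rfl⟩ | ⟨q, a, hq, rfl⟩)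
    · obtain ⟨hsrc, htgt⟩ := hsafe t0 ht0
      constructor
      · simp [lift1, noMove, hsrc]
      · simp only [lift1, noMove]
        split <;> simp [htgt]
    · constructor
      · simp [noMove]
      · simp only [noMove]
        intro hcon
        have : q = T.qinit := by simpa using hcon
        exact hq (this ▸ hi)
  · apply Set.Finite.union
    · exact hfin.image _
    · apply Set.Finite.subset (Set.finite_range
        (fun p : Q × Option Sg =>
          (⟨.inr p.1, p.2, [], .nop, .inl p.1⟩ : PTrans (Q ⊕ Q) Sg n)))
      rintro t ⟨q, a, -, rfl⟩
      exact ⟨(q, a), rfl⟩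

lemma sem_noMove (T : PT Q Sg Gm n) : (noMove T).Sem = T.Sem := by
  ext p
  constructor
  · intro hp
    exact (backward_run T hp ⟨T.qfin, [], 0⟩ rfl).1 ⟨T.qinit, [], 0⟩ rfl
  · intro hp
    exact forward_run T hp

end Construction
end RevPeb

namespace RevPeb

/-- Every reversible `n`-pebble transducer `T` with state set `Q` can be
transformed into a reversible `n`-pebble transducer `T'` with at most `3·|Q|` states
computing the same partial function, in which every transition moving the head (i.e. whose
target state has nonzero polarity) has operation `nop`. -/
theorem drop_lift_no_move
    {Q Sg Gm : Type} [Fintype Q] [Fintype Sg] {n : ℕ}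
    (T : PT Q Sg Gm n) (hWF : T.WF) (hRev : T.Reversible) :
    ∃ (Q' : Type) (instQ' : Fintype Q') (T' : PT Q' Sg Gm n),
      T'.WF ∧ T'.Reversible ∧
      @Fintype.card Q' instQ' ≤ 3 * Fintype.card Q ∧
      T'.Sem = T.Sem ∧
      ∀ t ∈ T'.δ, T'.dir t.tgt ≠ 0 → t.op = PebOp.nop := by
  refine ⟨Q ⊕ Q, inferInstance, noMove T, wf_noMove T hWF,
    ⟨det_noMove T hRev.1, revdet_noMove T hRev.2⟩, ?_, sem_noMove T, ?_⟩
  · rw [Fintype.card_sum]; omega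
  · rintro t (⟨t0, ht0, rfl⟩ | ⟨q, a, hq, rfl⟩) hdir
    · exfalso
      apply hdir
      by_cases hd : T.dir t0.tgt = 0
      · simp [lift1, hd, dir_inl]
      · simp [lift1, hd, dir_inr]
    · rfl

end RevPeb
end

section
/- There is an absolute constant c such that for every 0-pebble transducer P with n states, there exists a two-way transducer T with at most c·n states such that ⟦T⟧ = ⟦P⟧. Moreover, if P is reversible then T is reversible. -/
namespace RevPeb

/-- Letters of the two-way tape alphabet `Σ ∪ {⊢, ⊣}`. -/
inductive TWLetter (Sg : Type*) : Type _ where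
  | lend : TWLetter Sg
  | rend : TWLetter Sg
  | letter : Sg → TWLetter Sg

/-- A transition `(q, a, p)` of a two-way transducer. -/
structure TWTrans (Q Sg : Type*) where
  src : Q
  letter : TWLetter Sg
  tgt : Q

/-- A two-way transducer (data part). `fwd q = true` means `q ∈ Q⁺`. -/
structure TW (Q Sg Gm : Type*) where
  fwd : Q → Bool
  qinit : Q
  qfin : Q
  δ : Set (TWTrans Q Sg)
  μ : TWTrans Q Sg → List Gm

variable {Q Sg Gm : Type*}

/-- Well-formedness of a two-way transducer: `q_i, q_f ∈ Q⁺`, `q_i ≠ q_f`, `q_i` appears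
only in transitions `(q_i, ⊢, p)`, `q_f` only in transitions `(q, ⊣, q_f)`, transitions
reading `⊢` have forward targets, transitions reading `⊣` go to `q_f` or to a backward
state, and `δ` is finite. -/
def TW.WF (T : TW Q Sg Gm) : Prop :=
  T.fwd T.qinit = true ∧ T.fwd T.qfin = true ∧ T.qinit ≠ T.qfin ∧
  (∀ t ∈ T.δ,
    (t.src = T.qinit → t.letter = TWLetter.lend) ∧ t.tgt ≠ T.qinit ∧
    t.src ≠ T.qfin ∧ (t.tgt = T.qfin → t.letter = TWLetter.rend) ∧
    (t.letter = TWLetter.lend → T.fwd t.tgt = true) ∧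
    (t.letter = TWLetter.rend → (t.tgt = T.qfin ∨ T.fwd t.tgt = false))) ∧
  T.δ.Finite

/-- The letter of `⊢u⊣` to the right of the in-between position `h ∈ {0,…,|u|+1}`. -/
def rightOf (u : List Sg) (h : ℕ) : Option (TWLetter Sg) :=
  if h = 0 then some TWLetter.lend
  else if h ≤ u.length then (u[h-1]?).map TWLetter.letter
  else if h = u.length + 1 then some TWLetter.rend
  else none

/-- One step of a two-way transducer; configurations are pairs (state, head position). -/
def TW.StepT (T : TW Q Sg Gm) (u : List Sg) (t : TWTrans Q Sg) (C C' : Q × ℕ) : Prop :=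
  t ∈ T.δ ∧ C.1 = t.src ∧ C'.1 = t.tgt ∧
  (if T.fwd t.src = true then
     rightOf u C.2 = some t.letter ∧
     C'.2 = (if T.fwd t.tgt = true then C.2 + 1 else C.2)
   else
     1 ≤ C.2 ∧ rightOf u (C.2 - 1) = some t.letter ∧
     C'.2 = (if T.fwd t.tgt = true then C.2 else C.2 - 1))

/-- Runs of a two-way transducer, accumulating outputs. -/
inductive TW.Run (T : TW Q Sg Gm) (u : List Sg) :
    Q × ℕ → Q × ℕ → List Gm → Prop where
  | refl (C : Q × ℕ) : TW.Run T u C C []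
  | step {C C' C'' : Q × ℕ} (t : TWTrans Q Sg) {v : List Gm} :
      T.StepT u t C C' → TW.Run T u C' C'' v → TW.Run T u C C'' (T.μ t ++ v)

/-- Semantics of a two-way transducer: accepting runs go from `(q_i,0)` to `(q_f,|u|+2)`. -/
def TW.Sem (T : TW Q Sg Gm) : Set (List Sg × List Gm) :=
  {p | T.Run p.1 (T.qinit, 0) (T.qfin, p.1.length + 2) p.2}

def TW.Enabled (T : TW Q Sg Gm) (u : List Sg) (t : TWTrans Q Sg) (C : Q × ℕ) : Prop :=
  ∃ C', T.StepT u t C C'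

def TW.RevEnabled (T : TW Q Sg Gm) (u : List Sg) (t : TWTrans Q Sg) (C' : Q × ℕ) : Prop :=
  ∃ C, T.StepT u t C C'

def TW.Deterministic (T : TW Q Sg Gm) : Prop :=
  ∀ (u : List Sg) (t₁ t₂ : TWTrans Q Sg) (C : Q × ℕ),
    T.Enabled u t₁ C → T.Enabled u t₂ C → t₁ = t₂

def TW.RevDeterministic (T : TW Q Sg Gm) : Prop :=
  ∀ (u : List Sg) (t₁ t₂ : TWTrans Q Sg) (C' : Q × ℕ),
    T.RevEnabled u t₁ C' → T.RevEnabled u t₂ C' → t₁ = t₂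

def TW.Reversible (T : TW Q Sg Gm) : Prop := T.Deterministic ∧ T.RevDeterministic

end RevPeb

/-!
A configuration `(q, h)` of the `0`-pebble transducer `P` on the circular word `#u` is simulated
on `⊢u⊣` by a forward copy of `q` at position `h` or a backward copy at position `h + 1`: both
read the letter at `h`, and a step into a forward (backward) copy lands the head at `h + 1` (`h`),
which is where `P` moves its head unless it stays put or wraps around the circle. Those two
situations are repaired by silent gadgets (sweeping to the other end of the tape, or turning
around on the spot), four per state of `P` plus one for acceptance, so `5 |Q| + 1` states
suffice. Conversely, decoding every configuration of the simulation to the configuration of `P`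
it stands for turns each of its steps into a step of `P` or a silent stutter. Finally, two
transitions of the simulation with the same source (target) and letter are equal or come from
transitions of `P` with the same source (target) and letter, so determinism and reverse
determinism of `P` carry over.
-/

namespace RevPeb

section Letters

variable {Sg : Type*}

def twOf : Option Sg → TWLetter Sg
  | none => .lend
  | some σ => .letter σ

@[simp] lemma twOf_none : twOf (none : Option Sg) = .lend := rfl

@[simp] lemma twOf_some (σ : Sg) : twOf (some σ) = .letter σ := rfl

@[simp] lemma twOf_ne_rend (a : Option Sg) : twOf a ≠ .rend := by
  cases a <;> simp

@[simp] lemma rend_ne_twOf (a : Option Sg) : .rend ≠ twOf a := (twOf_ne_rend a).symm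

lemma twOf_injective : Function.Injective (twOf (Sg := Sg)) := by
  rintro (_ | _) (_ | _) h <;> simp_all

@[simp] lemma twOf_inj {a b : Option Sg} : twOf a = twOf b ↔ a = b :=
  twOf_injective.eq_iff

def untw : TWLetter Sg → Option Sg
  | .letter σ => some σ
  | _ => none

@[simp] lemma untw_twOf (a : Option Sg) : untw (twOf a) = a := by
  cases a <;> rfl

variable {u : List Sg} {p : ℕ}

lemma letterAt_eq_none_iff (hp : p ≤ u.length) : letterAt u p = none ↔ p = 0 := by
  unfold letterAt
  split_ifs with h0
  · simp [h0]
  · simp only [h0, iff_false, List.getElem?_eq_none_iff, not_le]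
    omega

lemma rightOf_eq_twOf (hp : p ≤ u.length) : rightOf u p = some (twOf (letterAt u p)) := by
  unfold rightOf letterAt
  split_ifs with h0
  · rfl
  · rw [List.getElem?_eq_getElem (by omega)]; rfl

lemma rightOf_eq_some_twOf_iff {a : Option Sg} :
    rightOf u p = some (twOf a) ↔ p ≤ u.length ∧ letterAt u p = a := by
  refine ⟨fun h => ?_, fun ⟨hp, ha⟩ => ha ▸ rightOf_eq_twOf hp⟩
  have hp : p ≤ u.length := by
    by_contra hp
    unfold rightOf at h
    split_ifs at h <;> first | omega | exact twOf_ne_rend a (Option.some.inj h).symm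
  exact ⟨hp, by simpa [rightOf_eq_twOf hp] using h⟩

lemma rightOf_eq_some_lend_iff : rightOf u p = some .lend ↔ p = 0 := by
  rw [← twOf_none, rightOf_eq_some_twOf_iff]
  constructor
  · rintro ⟨hp, h⟩; exact (letterAt_eq_none_iff hp).1 h
  · rintro rfl; simp [letterAt]

lemma rightOf_eq_some_rend_iff : rightOf u p = some .rend ↔ p = u.length + 1 := by
  unfold rightOf
  split_ifs <;> simp <;> omega

lemma exists_letterAt_eq_some (h1 : 1 ≤ p) (h2 : p ≤ u.length) :
    ∃ σ, letterAt u p = some σ := by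
  cases h : letterAt u p with
  | none => exact absurd ((letterAt_eq_none_iff h2).1 h) (by omega)
  | some σ => exact ⟨σ, rfl⟩

lemma exists_rightOf_eq_letter (h1 : 1 ≤ p) (h2 : p ≤ u.length) :
    ∃ σ, rightOf u p = some (.letter σ) := by
  obtain ⟨σ, hσ⟩ := exists_letterAt_eq_some h1 h2
  exact ⟨σ, by rw [rightOf_eq_twOf h2, hσ]; rfl⟩

lemma exists_rightOf_ne_lend (h1 : 1 ≤ p) (h2 : p ≤ u.length + 1) :
    ∃ x, x ≠ .lend ∧ rightOf u p = some x := by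
  rcases Nat.lt_or_ge p (u.length + 1) with hp | hp
  · obtain ⟨σ, hσ⟩ := exists_rightOf_eq_letter (u := u) h1 (by omega)
    exact ⟨_, by simp, hσ⟩
  · exact ⟨.rend, by simp, rightOf_eq_some_rend_iff.2 (by omega)⟩

end Letters

section ZeroPebble

variable {Q Sg Gm : Type*} {P : PT Q Sg Gm 0}

instance : IsEmpty (Atom 0) :=
  ⟨fun a => by cases a with | headPeb i => exact i.elim0 | pebPeb i _ => exact i.elim0⟩

lemma PebOp.eq_nop_of_zero (o : PebOp 0) : o = .nop := by
  cases o with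
  | nop => rfl
  | drop i => exact i.elim0
  | lift i => exact i.elim0

lemma PTrans.eq_mk_of_zero (τ : PTrans Q Sg 0) : τ = ⟨τ.src, τ.letter, [], .nop, τ.tgt⟩ := by
  obtain ⟨_, _, _ | ⟨⟨a, _⟩, _⟩, o, _⟩ := τ
  · rw [PebOp.eq_nop_of_zero o]
  · exact isEmptyElim a

lemma PT.WF.qinit_ne_qfin (hw : P.WF) : P.qinit ≠ P.qfin :=
  hw.2.2.1

lemma PT.WF.src_ne_qfin (hw : P.WF) {τ : PTrans Q Sg 0} (hτ : τ ∈ P.δ) : τ.src ≠ P.qfin :=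
  (hw.2.2.2.1 τ hτ).1

lemma PT.WF.tgt_ne_qinit (hw : P.WF) {τ : PTrans Q Sg 0} (hτ : τ ∈ P.δ) : τ.tgt ≠ P.qinit :=
  (hw.2.2.2.1 τ hτ).2

lemma exists_letterAt_eq (a : Option Sg) :
    ∃ (u : List Sg) (h : ℕ), h ≤ u.length ∧ letterAt u h = a := by
  cases a with
  | none => exact ⟨[], 0, le_rfl, rfl⟩
  | some σ => exact ⟨[σ], 1, le_rfl, rfl⟩

lemma PT.stepT_zero_iff {u : List Sg} {τ : PTrans Q Sg 0} {q : Q} {peb : List ℕ} {h : ℕ}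
    {C' : Config Q} :
    P.StepT u τ ⟨q, peb, h⟩ C' ↔ τ ∈ P.δ ∧ q = τ.src ∧ peb = [] ∧ h ≤ u.length ∧
      letterAt u h = τ.letter ∧ C' = ⟨τ.tgt, [], nextHead u.length h (P.dir τ.tgt)⟩ := by
  obtain ⟨q', peb', h'⟩ := C'
  rw [τ.eq_mk_of_zero]
  simp only [PT.StepT, testSat, opEnabled, opApply, List.length_eq_zero_iff,
    Nat.le_zero, Config.mk.injEq, List.not_mem_nil, IsEmpty.forall_iff, true_and]
  constructor
  · rintro ⟨h1, h2, h3, rfl, h5, h6, h7, h8⟩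
    exact ⟨h1, h2, rfl, h3, h5, h6, h7, h8⟩
  · rintro ⟨h1, h2, rfl, h3, h5, h6, h7, h8⟩
    exact ⟨h1, h2, h3, rfl, h5, h6, h7, h8⟩

lemma PT.Deterministic.eq_of_src_of_letter (hP : P.Deterministic) {τ₁ τ₂ : PTrans Q Sg 0}
    (h₁ : τ₁ ∈ P.δ) (h₂ : τ₂ ∈ P.δ) (hs : τ₁.src = τ₂.src) (ha : τ₁.letter = τ₂.letter) :
    τ₁ = τ₂ := by
  obtain ⟨u, h, hh, hu⟩ := exists_letterAt_eq τ₁.letter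
  exact hP u τ₁ τ₂ ⟨τ₁.src, [], h⟩ ⟨_, PT.stepT_zero_iff.2 ⟨h₁, rfl, rfl, hh, hu, rfl⟩⟩
    ⟨_, PT.stepT_zero_iff.2 ⟨h₂, hs, rfl, hh, hu.trans ha, rfl⟩⟩

lemma PT.RevDeterministic.eq_of_tgt_of_letter (hP : P.RevDeterministic)
    {τ₁ τ₂ : PTrans Q Sg 0} (h₁ : τ₁ ∈ P.δ) (h₂ : τ₂ ∈ P.δ) (ht : τ₁.tgt = τ₂.tgt)
    (ha : τ₁.letter = τ₂.letter) : τ₁ = τ₂ := by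
  obtain ⟨u, h, hh, hu⟩ := exists_letterAt_eq τ₁.letter
  exact hP u τ₁ τ₂ _ ⟨_, PT.stepT_zero_iff.2 ⟨h₁, rfl, rfl, hh, hu, rfl⟩⟩
    ⟨_, PT.stepT_zero_iff.2 ⟨h₂, rfl, rfl, hh, hu.trans ha, by rw [ht]⟩⟩

end ZeroPebble

section TwoWay

variable {Q Sg Gm : Type*} {T : TW Q Sg Gm} {u : List Sg}

lemma TW.stepT_iff {t : TWTrans Q Sg} {s s' : Q} {i i' : ℕ} :
    T.StepT u t (s, i) (s', i') ↔ t ∈ T.δ ∧ s = t.src ∧ s' = t.tgt ∧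
      ∃ p, rightOf u p = some t.letter ∧ i = (bif T.fwd t.src then p else p + 1) ∧
        i' = (bif T.fwd t.tgt then p + 1 else p) := by
  unfold TW.StepT
  refine and_congr_right fun _ => and_congr_right fun hs => and_congr_right fun _ => ?_
  cases T.fwd t.src <;> cases T.fwd t.tgt <;>
    simp only [if_true, if_false, Bool.false_eq_true, cond_true, cond_false]
  · constructor
    · rintro ⟨h1, h2, h3⟩; exact ⟨i - 1, h2, by omega, by omega⟩
    · rintro ⟨p, h2, rfl, rfl⟩; exact ⟨by omega, by simpa using h2, by omega⟩
  · constructor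
    · rintro ⟨h1, h2, h3⟩; exact ⟨i - 1, h2, by omega, by omega⟩
    · rintro ⟨p, h2, rfl, rfl⟩; exact ⟨by omega, by simpa using h2, by omega⟩
  · constructor
    · rintro ⟨h2, h3⟩; exact ⟨i, h2, rfl, h3⟩
    · rintro ⟨p, h2, rfl, rfl⟩; exact ⟨h2, rfl⟩
  · constructor
    · rintro ⟨h2, h3⟩; exact ⟨i, h2, rfl, h3⟩
    · rintro ⟨p, h2, rfl, rfl⟩; exact ⟨h2, rfl⟩

lemma TW.stepT_of_rightOf {t : TWTrans Q Sg} {p : ℕ} (ht : t ∈ T.δ)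
    (hp : rightOf u p = some t.letter) :
    T.StepT u t (t.src, bif T.fwd t.src then p else p + 1)
      (t.tgt, bif T.fwd t.tgt then p + 1 else p) :=
  TW.stepT_iff.2 ⟨ht, rfl, rfl, p, hp, rfl, rfl⟩

lemma TW.Run.trans {C C' C'' : Q × ℕ} {v w : List Gm} (h₁ : T.Run u C C' v)
    (h₂ : T.Run u C' C'' w) : T.Run u C C'' (v ++ w) := by
  induction h₁ with
  | refl => exact h₂
  | step t hs _ ih => rw [List.append_assoc]; exact .step t hs (ih h₂)

lemma TW.Run.single {t : TWTrans Q Sg} {C C' : Q × ℕ} (h : T.StepT u t C C') :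
    T.Run u C C' (T.μ t) := by
  simpa using TW.Run.step t h (.refl C')

lemma TW.Run.cons_nil {t : TWTrans Q Sg} {C C' C'' : Q × ℕ} {v : List Gm}
    (h : T.StepT u t C C') (hμ : T.μ t = []) (hr : T.Run u C' C'' v) : T.Run u C C'' v := by
  simpa [hμ] using TW.Run.step t h hr

lemma TW.run_sweep_right {s : Q} (hs : T.fwd s) (hδ : ∀ σ, ⟨s, .letter σ, s⟩ ∈ T.δ)
    (hμ : ∀ σ, T.μ ⟨s, .letter σ, s⟩ = []) {m : ℕ} (h1 : 1 ≤ m) (h2 : m ≤ u.length + 1) :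
    T.Run u (s, m) (s, u.length + 1) [] := by
  obtain ⟨d, hd⟩ : ∃ d, u.length + 1 = m + d := ⟨u.length + 1 - m, by omega⟩
  induction d generalizing m with
  | zero => rw [hd]; exact .refl _
  | succ d ih =>
    obtain ⟨σ, hσ⟩ := exists_rightOf_eq_letter (u := u) h1 (by omega)
    have hstep := TW.stepT_of_rightOf (T := T) (hδ σ) hσ
    simp only [hs, cond_true] at hstep
    exact .cons_nil hstep (hμ σ) (ih (by omega) (by omega) (by omega))

lemma TW.run_sweep_left {s : Q} (hs : T.fwd s = false) (hδ : ∀ σ, ⟨s, .letter σ, s⟩ ∈ T.δ)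
    (hμ : ∀ σ, T.μ ⟨s, .letter σ, s⟩ = []) {m : ℕ} (h1 : 1 ≤ m) (h2 : m ≤ u.length + 1) :
    T.Run u (s, m) (s, 1) [] := by
  induction m with
  | zero => omega
  | succ m ih =>
    rcases Nat.eq_zero_or_pos m with rfl | hm
    · exact .refl _
    obtain ⟨σ, hσ⟩ := exists_rightOf_eq_letter (u := u) hm (by omega)
    have hstep := TW.stepT_of_rightOf (T := T) (hδ σ) hσ
    simp only [hs, cond_false] at hstep
    exact .cons_nil hstep (hμ σ) (ih hm (by omega))

lemma TW.deterministic_of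
    (h : ∀ t₁ ∈ T.δ, ∀ t₂ ∈ T.δ, t₁.src = t₂.src → t₁.letter = t₂.letter → t₁ = t₂) :
    T.Deterministic := by
  rintro u t₁ t₂ ⟨s, i⟩ ⟨⟨s₁, i₁⟩, h₁⟩ ⟨⟨s₂, i₂⟩, h₂⟩
  obtain ⟨ht₁, rfl, -, p₁, hp₁, hi₁, -⟩ := TW.stepT_iff.1 h₁
  obtain ⟨ht₂, hs, -, p₂, hp₂, hi₂, -⟩ := TW.stepT_iff.1 h₂
  rw [← hs] at hi₂
  obtain rfl : p₁ = p₂ := by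
    cases h : T.fwd t₁.src <;> simp only [h, cond_true, cond_false] at hi₁ hi₂ <;> omega
  exact h t₁ ht₁ t₂ ht₂ hs (Option.some.inj (hp₁.symm.trans hp₂))

lemma TW.revDeterministic_of
    (h : ∀ t₁ ∈ T.δ, ∀ t₂ ∈ T.δ, t₁.tgt = t₂.tgt → t₁.letter = t₂.letter → t₁ = t₂) :
    T.RevDeterministic := by
  rintro u t₁ t₂ ⟨s, i⟩ ⟨⟨s₁, i₁⟩, h₁⟩ ⟨⟨s₂, i₂⟩, h₂⟩
  obtain ⟨ht₁, -, rfl, p₁, hp₁, -, hi₁⟩ := TW.stepT_iff.1 h₁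
  obtain ⟨ht₂, -, hs, p₂, hp₂, -, hi₂⟩ := TW.stepT_iff.1 h₂
  rw [← hs] at hi₂
  obtain rfl : p₁ = p₂ := by
    cases h : T.fwd t₁.tgt <;> simp only [h, cond_true, cond_false] at hi₁ hi₂ <;> omega
  exact h t₁ ht₁ t₂ ht₂ hs (Option.some.inj (hp₁.symm.trans hp₂))

instance {Sg : Type*} [Finite Sg] : Finite (TWLetter Sg) :=
  Finite.of_surjective (fun o : Option (Option Sg) => o.elim .rend twOf) <| by
    rintro (_ | _ | σ)
    exacts [⟨some none, rfl⟩, ⟨none, rfl⟩, ⟨some (some σ), rfl⟩]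

instance {Q Sg : Type*} [Finite Q] [Finite Sg] : Finite (TWTrans Q Sg) :=
  Finite.of_injective (fun t : TWTrans Q Sg => (t.src, t.letter, t.tgt)) <| by
    rintro ⟨⟩ ⟨⟩ h
    simp_all

end TwoWay

/-- A configuration `(q, h)` of the `0`-pebble transducer is simulated by `pos q` at position `h`
or by `neg q` at position `h + 1`; the other states are silent gadgets. -/
inductive SimState (Q : Type*) where
  | pos : Q → SimState Q
  | neg : Q → SimState Q
  | rewind : Q → SimState Q
  | turn : Q → SimState Q
  | seek : Q → SimState Q
  | exit : SimState Q

namespace SimState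

variable {Q : Type*}

def isFwd : SimState Q → Bool
  | neg _ | rewind _ => false
  | _ => true

def source? : SimState Q → Option Q
  | pos q | neg q => some q
  | _ => none

def landing? : SimState Q → Option Q
  | pos q | turn q | neg q | seek q => some q
  | _ => none

def encode : SimState Q → Option (Fin 5 × Q)
  | pos q => some (0, q)
  | neg q => some (1, q)
  | rewind q => some (2, q)
  | turn q => some (3, q)
  | seek q => some (4, q)
  | exit => none

lemma encode_injective : Function.Injective (encode (Q := Q)) := by
  intro a b h
  cases a <;> cases b <;> simp_all [encode]

instance [Finite Q] : Finite (SimState Q) :=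
  Finite.of_injective _ encode_injective

lemma card_le [Fintype Q] [Nonempty Q] [Fintype (SimState Q)] :
    Fintype.card (SimState Q) ≤ 6 * Fintype.card Q := by
  have h := Fintype.card_le_of_injective _ (SimState.encode_injective (Q := Q))
  simp only [Fintype.card_option, Fintype.card_prod, Fintype.card_fin] at h
  have := Fintype.card_pos (α := Q)
  omega

end SimState

namespace PT

open SimState

variable {Q Sg Gm : Type*} (P : PT Q Sg Gm 0)

open Classical in
/-- No step of a two-way transducer ends in a forward state at position `0`, so apart from the
initial state a forward copy is only used where it reads a letter. -/
noncomputable def simSrc (q : Q) (a : Option Sg) : SimState Q :=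
  if q = P.qinit ∨ P.dir q = .pos ∧ a.isSome then pos q else neg q

def simTgt (a : Option Sg) (q' : Q) : SimState Q :=
  match P.dir q', a with
  | .pos, _ => pos q'
  | .zero, _ => turn q'
  | .neg, none => seek q'
  | .neg, some _ => neg q'

/-- `main` copies a transition of `P`; the other transitions are silent. A forward move past the
last letter wraps around through `rewind`, a `turn` state at `h + 1` becomes `neg` at `h + 1`
(a stationary move, or the end of a rewind), `seek` carries a backward move from `#` to the right
end, and `exit` carries acceptance to `⊣`. -/
inductive SimTrans : TWTrans (SimState Q) Sg → Prop
  | main (τ : PTrans Q Sg 0) : τ ∈ P.δ → (τ.src = P.qinit → τ.letter = none) →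
      SimTrans ⟨P.simSrc τ.src τ.letter, twOf τ.letter, P.simTgt τ.letter τ.tgt⟩
  | wrap {q : Q} : P.dir q = .pos → SimTrans ⟨pos q, .rend, rewind q⟩
  | rewindLoop {q : Q} (σ : Sg) : SimTrans ⟨rewind q, .letter σ, rewind q⟩
  | rewindEnd {q : Q} : P.dir q = .pos → SimTrans ⟨rewind q, .lend, turn q⟩
  | turnBack {q : Q} {x : TWLetter Sg} : P.dir q ≠ .neg → x ≠ .lend →
      SimTrans ⟨turn q, x, neg q⟩
  | seekLoop {q : Q} (σ : Sg) : SimTrans ⟨seek q, .letter σ, seek q⟩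
  | seekEnd {q : Q} : P.dir q = .neg → SimTrans ⟨seek q, .rend, neg q⟩
  | accept : SimTrans ⟨neg P.qfin, .lend, exit⟩
  | exitLoop (σ : Sg) : SimTrans ⟨exit, .letter σ, exit⟩
  | exitEnd : SimTrans ⟨exit, .rend, pos P.qfin⟩

/-- Only the `main` transitions go from a `pos`/`neg` state to a state with a `landing?`. -/
def simOut (t : TWTrans (SimState Q) Sg) : List Gm :=
  match t.src.source?, t.tgt.landing? with
  | some q, some q' => P.μ ⟨q, untw t.letter, [], .nop, q'⟩
  | _, _ => []

def toTW : TW (SimState Q) Sg Gm where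
  fwd := isFwd
  qinit := pos P.qinit
  qfin := pos P.qfin
  δ := {t | P.SimTrans t}
  μ := P.simOut

noncomputable def encodeConfig (u : List Sg) (C : Config Q) : SimState Q × ℕ :=
  (P.simSrc C.q (letterAt u C.h), bif (P.simSrc C.q (letterAt u C.h)).isFwd then C.h else C.h + 1)

/-- `n` is the length of the input; `pos q` at `n + 1` (about to wrap around) and `pos P.qfin`
at `n + 2` (accepted) both stand for position `0`. -/
def decodeConfig (n : ℕ) : SimState Q × ℕ → Config Q
  | (pos q, i) => ⟨q, [], if i ≤ n then i else 0⟩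
  | (neg q, i) => ⟨q, [], i - 1⟩
  | (rewind q, _) => ⟨q, [], 0⟩
  | (turn q, i) => ⟨q, [], i - 1⟩
  | (seek q, _) => ⟨q, [], n⟩
  | (exit, _) => ⟨P.qfin, [], 0⟩

variable {P} {u : List Sg}

section

variable {q q' : Q} {a : Option Sg}

lemma source?_simSrc : (P.simSrc q a).source? = some q := by
  unfold simSrc; split_ifs <;> rfl

lemma landing?_simTgt : (P.simTgt a q').landing? = some q' := by
  unfold simTgt; split <;> rfl

lemma simOut_main : P.simOut ⟨P.simSrc q a, twOf a, P.simTgt a q'⟩ = P.μ ⟨q, a, [], .nop, q'⟩ := by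
  simp [simOut, source?_simSrc, landing?_simTgt]

lemma simSrc_eq_neg (hq : q ≠ P.qinit) (h : P.dir q ≠ .pos ∨ a = none) : P.simSrc q a = neg q := by
  unfold simSrc
  rw [if_neg]
  rintro (h' | ⟨h₁, h₂⟩)
  · exact hq h'
  · rcases h with h | rfl
    · exact h h₁
    · simp at h₂

lemma simSrc_some_eq_pos {σ : Sg} (h : P.dir q = .pos) : P.simSrc q (some σ) = pos q := by
  simp [simSrc, h]

lemma eq_of_simSrc_eq {q₂ : Q} {a₂ : Option Sg} (h : P.simSrc q a = P.simSrc q₂ a₂) : q = q₂ := by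
  simpa [source?_simSrc] using congrArg source? h

lemma eq_of_simTgt_eq {q₂ : Q} {a₂ : Option Sg} (h : P.simTgt a q' = P.simTgt a₂ q₂) : q' = q₂ := by
  simpa [landing?_simTgt] using congrArg landing? h

lemma eq_of_simSrc_eq_pos (h : P.simSrc q a = pos q') : q = q' := by
  unfold simSrc at h
  split_ifs at h; simp_all

lemma eq_of_simSrc_eq_neg (h : P.simSrc q a = neg q') : q = q' := by
  unfold simSrc at h
  split_ifs at h; simp_all

lemma simTgt_eq_pos (h : P.simTgt a q' = pos q) : q' = q ∧ P.dir q = .pos := by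
  unfold simTgt at h
  split at h <;> simp_all

lemma simTgt_eq_turn (h : P.simTgt a q' = turn q) : q' = q ∧ P.dir q = 0 := by
  unfold simTgt at h
  split at h <;> simp_all

lemma simTgt_eq_neg (h : P.simTgt a q' = neg q) : q' = q ∧ P.dir q = .neg := by
  unfold simTgt at h
  split at h <;> simp_all

lemma simTgt_eq_seek (h : P.simTgt a q' = seek q) : q' = q ∧ a = none := by
  unfold simTgt at h
  split at h <;> simp_all

lemma isFwd_simTgt_none : (P.simTgt (none : Option Sg) q').isFwd := by
  unfold simTgt
  split <;> simp_all [isFwd]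

@[simp] lemma simSrc_ne_rewind : P.simSrc q a ≠ rewind q' := by unfold simSrc; split_ifs <;> simp
@[simp] lemma simSrc_ne_turn : P.simSrc q a ≠ turn q' := by unfold simSrc; split_ifs <;> simp
@[simp] lemma simSrc_ne_seek : P.simSrc q a ≠ seek q' := by unfold simSrc; split_ifs <;> simp
@[simp] lemma simSrc_ne_exit : P.simSrc q a ≠ exit := by unfold simSrc; split_ifs <;> simp
@[simp] lemma simTgt_ne_rewind : P.simTgt a q ≠ rewind q' := by unfold simTgt; split <;> simp
@[simp] lemma simTgt_ne_exit : P.simTgt a q ≠ exit := by unfold simTgt; split <;> simp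

@[simp] lemma rewind_ne_simSrc : rewind q' ≠ P.simSrc q a := simSrc_ne_rewind.symm
@[simp] lemma turn_ne_simSrc : turn q' ≠ P.simSrc q a := simSrc_ne_turn.symm
@[simp] lemma seek_ne_simSrc : seek q' ≠ P.simSrc q a := simSrc_ne_seek.symm
@[simp] lemma exit_ne_simSrc : exit ≠ P.simSrc q a := simSrc_ne_exit.symm
@[simp] lemma rewind_ne_simTgt : rewind q' ≠ P.simTgt a q := simTgt_ne_rewind.symm
@[simp] lemma exit_ne_simTgt : exit ≠ P.simTgt a q := simTgt_ne_exit.symm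

end

lemma mem_toTW_δ {t : TWTrans (SimState Q) Sg} : t ∈ P.toTW.δ ↔ P.SimTrans t := Iff.rfl

@[simp] lemma toTW_fwd : P.toTW.fwd = isFwd := rfl

lemma decodeConfig_simSrc {n p : ℕ} (q : Q) (a : Option Sg) (hp : p ≤ n) :
    P.decodeConfig n (P.simSrc q a, bif (P.simSrc q a).isFwd then p else p + 1) = ⟨q, [], p⟩ := by
  unfold simSrc; split_ifs <;> simp_all [decodeConfig, isFwd]

lemma decodeConfig_simTgt {p : ℕ} (q' : Q) (hp : p ≤ u.length) :
    P.decodeConfig u.length (P.simTgt (letterAt u p) q',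
        bif (P.simTgt (letterAt u p) q').isFwd then p + 1 else p) =
      ⟨q', [], nextHead u.length p (P.dir q')⟩ := by
  unfold simTgt
  split
  case h_1 hd =>
    rcases Nat.lt_or_ge p u.length with h | h
    · simp [decodeConfig, isFwd, hd, nextHead, Nat.mod_eq_of_lt (by omega : p + 1 < u.length + 1),
        show p + 1 ≤ u.length by omega]
    · obtain rfl : p = u.length := by omega
      simp [decodeConfig, isFwd, hd, nextHead]
  case h_2 hd => simp [decodeConfig, isFwd, hd, nextHead]
  case h_3 hd ha =>
    obtain rfl := (letterAt_eq_none_iff hp).1 ha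
    simp [decodeConfig, hd, nextHead]
  case h_4 σ hd ha =>
    have h1 : p ≠ 0 := by rintro rfl; simp [letterAt] at ha
    simp only [decodeConfig, isFwd, hd, nextHead, cond_false]
    rw [show p + u.length = p - 1 + 1 * (u.length + 1) by omega, Nat.add_mul_mod_self_right,
      Nat.mod_eq_of_lt (by omega)]

lemma toTW_stepT_decodeConfig {t : TWTrans (SimState Q) Sg} {C C' : SimState Q × ℕ}
    (hs : P.toTW.StepT u t C C') :
    (∃ τ, P.StepT u τ (P.decodeConfig u.length C) (P.decodeConfig u.length C') ∧
        P.μ τ = P.simOut t) ∨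
      (P.decodeConfig u.length C' = P.decodeConfig u.length C ∧ P.simOut t = []) := by
  obtain ⟨s, i⟩ := C
  obtain ⟨s', i'⟩ := C'
  obtain ⟨ht, rfl, rfl, p, hp, rfl, rfl⟩ := TW.stepT_iff.1 hs
  cases mem_toTW_δ.1 ht with
  | main τ hτ _ =>
    obtain ⟨hpn, ha⟩ := rightOf_eq_some_twOf_iff.1 hp
    left
    refine ⟨τ, ?_, by rw [simOut_main, ← τ.eq_mk_of_zero]⟩
    simp only [toTW_fwd]
    rw [decodeConfig_simSrc _ _ hpn, ← ha, decodeConfig_simTgt _ hpn]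
    exact stepT_zero_iff.2 ⟨hτ, rfl, rfl, hpn, ha, rfl⟩
  | wrap =>
    obtain rfl := rightOf_eq_some_rend_iff.1 hp
    simp [toTW, decodeConfig, isFwd, simOut, landing?]
  | rewindEnd =>
    obtain rfl := rightOf_eq_some_lend_iff.1 hp
    simp [toTW, decodeConfig, isFwd, simOut, source?]
  | seekEnd =>
    obtain rfl := rightOf_eq_some_rend_iff.1 hp
    simp [toTW, decodeConfig, isFwd, simOut, source?]
  | accept =>
    obtain rfl := rightOf_eq_some_lend_iff.1 hp
    simp [toTW, decodeConfig, isFwd, simOut, landing?]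
  | exitEnd =>
    obtain rfl := rightOf_eq_some_rend_iff.1 hp
    simp [toTW, decodeConfig, isFwd, simOut, source?]
  | _ => simp [toTW, decodeConfig, isFwd, simOut, source?]

lemma toTW_run_decodeConfig {C C' : SimState Q × ℕ} {v : List Gm}
    (hr : P.toTW.Run u C C' v) :
    P.Run u (P.decodeConfig u.length C) (P.decodeConfig u.length C') v := by
  induction hr with
  | refl => exact .refl _
  | step t hs _ ih =>
    rcases toTW_stepT_decodeConfig hs with ⟨τ, hτ, hμ⟩ | ⟨heq, hμ⟩
    · simpa [toTW, hμ] using PT.Run.step τ hτ ih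
    · simpa [toTW, hμ, heq] using ih

lemma encodeConfig_of_neg {q : Q} {peb : List ℕ} {h : ℕ} (hq : q ≠ P.qinit)
    (hd : P.dir q ≠ .pos ∨ letterAt u h = none) :
    P.encodeConfig u ⟨q, peb, h⟩ = (neg q, h + 1) := by
  simp [encodeConfig, simSrc_eq_neg hq hd, isFwd]

lemma encodeConfig_of_pos {q : Q} {peb : List ℕ} {h : ℕ} {σ : Sg} (hd : P.dir q = .pos)
    (hσ : letterAt u h = some σ) : P.encodeConfig u ⟨q, peb, h⟩ = (pos q, h) := by
  simp [encodeConfig, hσ, simSrc_some_eq_pos hd, isFwd]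

lemma toTW_stepT {t : TWTrans (SimState Q) Sg} (ht : P.SimTrans t) {p : ℕ}
    (hp : rightOf u p = some t.letter) :
    P.toTW.StepT u t (t.src, bif t.src.isFwd then p else p + 1)
      (t.tgt, bif t.tgt.isFwd then p + 1 else p) :=
  TW.stepT_of_rightOf (T := P.toTW) ht hp

lemma toTW_run_turn {q : Q} (hd : P.dir q ≠ .neg) {i : ℕ} (h1 : 1 ≤ i) (h2 : i ≤ u.length + 1) :
    P.toTW.Run u (turn q, i) (neg q, i) [] := by
  obtain ⟨x, hx, hi⟩ := exists_rightOf_ne_lend h1 h2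
  exact .single (toTW_stepT (.turnBack hd hx) hi)

lemma toTW_run_wrap {q : Q} (hd : P.dir q = .pos) :
    P.toTW.Run u (pos q, u.length + 1) (neg q, 1) [] := by
  have hwrap := toTW_stepT (u := u) (.wrap hd) (rightOf_eq_some_rend_iff.2 rfl)
  have hsweep := TW.run_sweep_left (T := P.toTW) (u := u) (s := rewind q) rfl
    (fun σ => .rewindLoop σ) (fun _ => rfl) (m := u.length + 1) (by omega) le_rfl
  have hend := toTW_stepT (u := u) (.rewindEnd hd) (rightOf_eq_some_lend_iff.2 rfl)
  exact .cons_nil hwrap rfl (hsweep.trans (.cons_nil hend rfl (toTW_run_turn (i := 1)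
    (by simp [hd]) le_rfl (by omega))))

lemma toTW_run_seek {q : Q} (hd : P.dir q = .neg) :
    P.toTW.Run u (seek q, 1) (neg q, u.length + 1) [] := by
  have hsweep := TW.run_sweep_right (T := P.toTW) (u := u) (s := seek q) rfl
    (fun σ => .seekLoop σ) (fun _ => rfl) (m := 1) le_rfl (by omega)
  have hend := toTW_stepT (u := u) (.seekEnd hd) (rightOf_eq_some_rend_iff.2 rfl)
  exact hsweep.trans (.single hend)

lemma toTW_run_accept : P.toTW.Run u (neg P.qfin, 1) (pos P.qfin, u.length + 2) [] := by
  have hacc := toTW_stepT (P := P) (u := u) .accept (rightOf_eq_some_lend_iff.2 rfl)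
  have hsweep := TW.run_sweep_right (T := P.toTW) (u := u) (s := exit) rfl
    (fun σ => .exitLoop σ) (fun _ => rfl) (m := 1) le_rfl (by omega)
  have hend := toTW_stepT (P := P) (u := u) .exitEnd (rightOf_eq_some_rend_iff.2 rfl)
  exact .cons_nil hacc rfl (hsweep.trans (.single hend))

lemma toTW_run_simTgt {q' : Q} (hq' : q' ≠ P.qinit) {p : ℕ} (hp : p ≤ u.length) :
    P.toTW.Run u
      (P.simTgt (letterAt u p) q', bif (P.simTgt (letterAt u p) q').isFwd then p + 1 else p)
      (P.encodeConfig u ⟨q', [], nextHead u.length p (P.dir q')⟩) [] := by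
  unfold simTgt
  split
  case h_1 hd =>
    rcases Nat.lt_or_ge p u.length with h | h
    · obtain ⟨σ, hσ⟩ := exists_letterAt_eq_some (u := u) (p := p + 1) (by omega) (by omega)
      have hnext : nextHead u.length p .pos = p + 1 := Nat.mod_eq_of_lt (by omega)
      rw [hd, hnext, encodeConfig_of_pos hd hσ]
      exact .refl _
    · obtain rfl : p = u.length := by omega
      have hnext : nextHead u.length u.length .pos = 0 := by simp [nextHead]
      rw [hd, hnext, encodeConfig_of_neg hq' (Or.inr (by simp [letterAt]))]
      exact toTW_run_wrap hd
  case h_2 hd =>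
    rw [hd, encodeConfig_of_neg hq' (Or.inl (by simp [hd]))]
    exact toTW_run_turn (i := p + 1) (by simp [hd]) (by omega) (by omega)
  case h_3 hd ha =>
    obtain rfl := (letterAt_eq_none_iff hp).1 ha
    have hnext : nextHead u.length 0 .neg = u.length := by simp [nextHead]
    rw [hd, hnext, encodeConfig_of_neg hq' (Or.inl (by simp [hd]))]
    exact toTW_run_seek hd
  case h_4 σ hd ha =>
    have h1 : p ≠ 0 := by rintro rfl; simp [letterAt] at ha
    have hnext : nextHead u.length p .neg = p - 1 := by
      simp only [nextHead]
      rw [show p + u.length = p - 1 + 1 * (u.length + 1) by omega, Nat.add_mul_mod_self_right,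
        Nat.mod_eq_of_lt (by omega)]
    rw [hd, hnext, encodeConfig_of_neg hq' (Or.inl (by simp [hd]))]
    simp only [isFwd, cond_false, Nat.sub_add_cancel (Nat.one_le_iff_ne_zero.2 h1)]
    exact .refl _

lemma toTW_run_encodeConfig_of_stepT (hw : P.WF) {τ : PTrans Q Sg 0} {C C' : Config Q}
    (hs : P.StepT u τ C C') (hC : C.q = P.qinit → C.h = 0) :
    P.toTW.Run u (P.encodeConfig u C) (P.encodeConfig u C') (P.μ τ) := by
  obtain ⟨q, peb, h⟩ := C
  obtain ⟨hτ, rfl, rfl, hh, ha, rfl⟩ := stepT_zero_iff.1 hs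
  have hinit : τ.src = P.qinit → τ.letter = none := fun hq => by
    rw [← ha, show h = 0 from hC hq]; rfl
  have hmain := toTW_stepT (u := u) (.main τ hτ hinit) (rightOf_eq_some_twOf_iff.2 ⟨hh, ha⟩)
  have hsettle := toTW_run_simTgt (u := u) (hw.tgt_ne_qinit hτ) hh
  have henc : P.encodeConfig u ⟨τ.src, [], h⟩ =
      (P.simSrc τ.src τ.letter, bif (P.simSrc τ.src τ.letter).isFwd then h else h + 1) := by
    simp only [encodeConfig, ha]
  have hμ : P.μ τ =
      P.simOut ⟨P.simSrc τ.src τ.letter, twOf τ.letter, P.simTgt τ.letter τ.tgt⟩ ++ [] := by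
    rw [simOut_main, List.append_nil, ← τ.eq_mk_of_zero]
  rw [ha] at hsettle
  rw [henc, hμ]
  exact .step _ hmain hsettle

lemma toTW_run_of_run (hw : P.WF) {C : Config Q} {v : List Gm}
    (hr : P.Run u C ⟨P.qfin, [], 0⟩ v) (hC : C.q = P.qinit → C.h = 0) :
    P.toTW.Run u (P.encodeConfig u C) (pos P.qfin, u.length + 2) v := by
  generalize hD : (⟨P.qfin, [], 0⟩ : Config Q) = D at hr
  induction hr with
  | refl =>
    subst hD
    rw [encodeConfig_of_neg hw.qinit_ne_qfin.symm (Or.inr rfl)]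
    exact toTW_run_accept
  | step τ hs _ ih =>
    obtain ⟨hτ, -, -, -, -, rfl⟩ := stepT_zero_iff.1 hs
    exact (toTW_run_encodeConfig_of_stepT hw hs hC).trans
      (ih (fun h => absurd h (hw.tgt_ne_qinit hτ)) hD)

theorem toTW_sem (hw : P.WF) : P.toTW.Sem = P.Sem := by
  ext ⟨u, v⟩
  constructor
  · intro hr
    show P.Run u _ _ v
    simpa [toTW, decodeConfig] using toTW_run_decodeConfig hr
  · intro hr
    have := toTW_run_of_run hw hr fun _ => rfl
    rwa [encodeConfig, simSrc, if_pos (Or.inl rfl)] at this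

theorem toTW_wf (hw : P.WF) [Finite Q] [Finite Sg] : P.toTW.WF := by
  have hinit : P.dir P.qinit = 0 := hw.1
  have hfin : P.dir P.qfin = 0 := hw.2.1
  refine ⟨rfl, rfl, fun h => hw.qinit_ne_qfin (pos.inj h), fun t ht => ?_, Set.toFinite _⟩
  simp only [toTW]
  cases ht with
  | main τ hτ hτi =>
    refine ⟨fun h => ?_, fun h => ?_, fun h => hw.src_ne_qfin hτ (eq_of_simSrc_eq_pos h),
      fun h => ?_, fun h => ?_, fun h => absurd h (twOf_ne_rend _)⟩
    · rw [hτi (eq_of_simSrc_eq_pos h)]; rfl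
    · exact hw.tgt_ne_qinit hτ (simTgt_eq_pos h).1
    · simp [(simTgt_eq_pos h).2] at hfin
    · have hl : τ.letter = none := twOf_injective h
      show (P.simTgt τ.letter τ.tgt).isFwd
      rw [hl]
      exact isFwd_simTgt_none
  | wrap hd =>
    refine ⟨fun h => ?_, by simp, fun h => ?_, by simp, by simp, by simp [isFwd]⟩
    · cases h; simp [hinit] at hd
    · cases h; simp [hfin] at hd
  | exitEnd => simpa [isFwd] using hw.qinit_ne_qfin.symm
  | _ => simp_all [isFwd]

lemma toTW_deterministic (hw : P.WF) (hP : P.Deterministic) : P.toTW.Deterministic := by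
  refine TW.deterministic_of fun t₁ h₁ t₂ h₂ hs ha => ?_
  cases h₁ <;> cases h₂ <;> simp only [TWTrans.mk.injEq, twOf_inj, reduceCtorEq] at hs ha ⊢
  case main.main τ₁ hτ₁ _ τ₂ hτ₂ _ =>
    rw [hP.eq_of_src_of_letter hτ₁ hτ₂ (eq_of_simSrc_eq hs) ha]
    simp
  case main.accept τ hτ _ => exact absurd (eq_of_simSrc_eq_neg hs) (hw.src_ne_qfin hτ)
  case accept.main τ hτ _ => exact absurd (eq_of_simSrc_eq_neg hs.symm) (hw.src_ne_qfin hτ)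
  all_goals simp_all

lemma toTW_revDeterministic (hP : P.RevDeterministic) : P.toTW.RevDeterministic := by
  refine TW.revDeterministic_of fun t₁ h₁ t₂ h₂ hs ha => ?_
  cases h₁ <;> cases h₂ <;> simp only [TWTrans.mk.injEq, twOf_inj, reduceCtorEq] at hs ha ⊢
  case main.main τ₁ hτ₁ _ τ₂ hτ₂ _ =>
    rw [hP.eq_of_tgt_of_letter hτ₁ hτ₂ (eq_of_simTgt_eq hs) ha]
    simp
  case main.rewindEnd hd => simp [(simTgt_eq_turn hs).2] at hd
  case rewindEnd.main hd _ _ _ => simp [(simTgt_eq_turn hs.symm).2] at hd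
  case main.turnBack hd _ => exact (hd (simTgt_eq_neg hs).2).elim
  case turnBack.main hd _ _ _ _ => exact (hd (simTgt_eq_neg hs.symm).2).elim
  case main.seekLoop => simp [(simTgt_eq_seek hs).2] at ha
  case seekLoop.main => simp [(simTgt_eq_seek hs.symm).2] at ha
  all_goals simp_all

theorem toTW_reversible (hw : P.WF) (hP : P.Reversible) : P.toTW.Reversible :=
  ⟨toTW_deterministic hw hP.1, toTW_revDeterministic hP.2⟩

end PT

/-- There is an absolute constant `c` such that every `0`-pebble transducer
`P` with `n` states is equivalent to a two-way transducer `T` with at most `c·n` states;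
moreover if `P` is reversible then so is `T`. -/
theorem zero_pebble_to_two_way :
    ∃ c : ℕ,
      ∀ (Q Sg Gm : Type) (instQ : Fintype Q) (instSg : Fintype Sg)
        (P : PT Q Sg Gm 0), P.WF →
        ∃ (Q' : Type) (instQ' : Fintype Q') (T : TW Q' Sg Gm),
          T.WF ∧
          @Fintype.card Q' instQ' ≤ c * @Fintype.card Q instQ ∧
          T.Sem = P.Sem ∧
          (P.Reversible → T.Reversible) := by
  refine ⟨6, fun Q Sg Gm _ _ P hw => ?_⟩
  have : Nonempty Q := ⟨P.qinit⟩
  let _ : Fintype (SimState Q) := Fintype.ofInjective _ SimState.encode_injective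
  exact ⟨SimState Q, inferInstance, P.toTW, PT.toTW_wf hw, SimState.card_le, PT.toTW_sem hw,
    PT.toTW_reversible hw⟩

end RevPeb
end
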